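/- arXiv:1312.2076 — 15 statements merged into one kernel-verified Lean document; each statement's English description precedes it below -/
import Mathlib

section
/- Let A be a (not necessarily associative) algebra over a field of characteristic 0, with product denoted u.v. Then A is Poisson admissible if and only if for all u,v in A: [R_u, R_v] + L_{[u,v]} + 3[L_u, R_v] = 0, where L_u v = u.v, R_u v = v.u, and [u,v] = u.v - v.u. -/
/-!
Both sides are systems of trilinear identities, and each system is a linear consequence of
the other over `ℚ`. The operator identity evaluated at `w` is
`-½ J(u,v,w) + 4 A(v,w,u) + D(u,v,w) + 2 D(v,u,w)`, where `J` is the Jacobiator of the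
bracket, `A` the associator of `∘` and `D` the failure of `ad_u` to be a derivation of `∘`.
Conversely `3J`, `12A` and `6D` are signed sums of the operator identity over permutations
of its three arguments.
-/

/-- The commutator bracket `[u,v] = u.v - v.u` of a bilinear product. -/
def br {K V : Type*} [Field K] [AddCommGroup V] [Module K V]
    (m : V →ₗ[K] V →ₗ[K] V) (u v : V) : V :=
  m u v - m v u

/-- The symmetrized product `u ∘ v = (1/2)(u.v + v.u)`. -/
def circ {K V : Type*} [Field K] [AddCommGroup V] [Module K V]
    (m : V →ₗ[K] V →ₗ[K] V) (u v : V) : V :=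
  (2 : K)⁻¹ • (m u v + m v u)

/-- An algebra `(V, m)` is Poisson admissible if its commutator bracket satisfies the
Jacobi identity, its symmetrized product is associative (it is commutative by
definition), and each `ad_u = [u, ·]` is a derivation of the symmetrized product. -/
def PoissonAdmissible {K V : Type*} [Field K] [CharZero K] [AddCommGroup V] [Module K V]
    (m : V →ₗ[K] V →ₗ[K] V) : Prop :=
  (∀ u v w : V, br m u (br m v w) + br m v (br m w u) + br m w (br m u v) = 0) ∧
  (∀ u v w : V, circ m (circ m u v) w = circ m u (circ m v w)) ∧
  (∀ u v w : V, br m u (circ m v w) = circ m (br m u v) w + circ m v (br m u w))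

/-- Every left multiplication is a derivation. -/
def LeftLeibniz {K V : Type*} [Field K] [AddCommGroup V] [Module K V]
    (m : V →ₗ[K] V →ₗ[K] V) : Prop :=
  ∀ u v w : V, m u (m v w) = m (m u v) w + m v (m u w)

/-- Every right multiplication is a derivation. -/
def RightLeibniz {K V : Type*} [Field K] [AddCommGroup V] [Module K V]
    (m : V →ₗ[K] V →ₗ[K] V) : Prop :=
  ∀ u v w : V, m (m v w) u = m (m v u) w + m v (m w u)

/-- A symmetric Leibniz algebra is both left and right Leibniz. -/
def SymLeibniz {K V : Type*} [Field K] [AddCommGroup V] [Module K V]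
    (m : V →ₗ[K] V →ₗ[K] V) : Prop :=
  LeftLeibniz m ∧ RightLeibniz m

/-- An LR-algebra: left multiplications pairwise commute and right multiplications
pairwise commute. -/
def LRAlg {K V : Type*} [Field K] [AddCommGroup V] [Module K V]
    (m : V →ₗ[K] V →ₗ[K] V) : Prop :=
  (∀ u v w : V, m u (m v w) = m v (m u w)) ∧ (∀ u v w : V, m (m w u) v = m (m w v) u)

/-- Associativity of a bilinear product. -/
def IsAssoc {K V : Type*} [Field K] [AddCommGroup V] [Module K V]
    (m : V →ₗ[K] V →ₗ[K] V) : Prop :=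
  ∀ u v w : V, m (m u v) w = m u (m v w)

section

variable {K V : Type*} [Field K] [AddCommGroup V] [Module K V] (m : V →ₗ[K] V →ₗ[K] V)

def jacobiator (u v w : V) : V :=
  br m u (br m v w) + br m v (br m w u) + br m w (br m u v)

def circAssociator (u v w : V) : V :=
  circ m (circ m u v) w - circ m u (circ m v w)

def circLeibnizDefect (u v w : V) : V :=
  br m u (circ m v w) - (circ m (br m u v) w + circ m v (br m u w))

/-- `([R_u, R_v] + L_{[u,v]} + 3 [L_u, R_v]) w`. -/
def admissibilityDefect (u v w : V) : V :=
  (m (m w v) u - m (m w u) v) + m (br m u v) w + (3 : K) • (m u (m w v) - m (m u w) v)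

theorem poissonAdmissible_iff [CharZero K] :
    PoissonAdmissible m ↔ (∀ u v w, jacobiator m u v w = 0) ∧
      (∀ u v w, circAssociator m u v w = 0) ∧ ∀ u v w, circLeibnizDefect m u v w = 0 := by
  simp only [PoissonAdmissible, jacobiator, circAssociator, circLeibnizDefect, sub_eq_zero]

variable (u v w : V)

theorem admissibilityDefect_eq [CharZero K] :
    admissibilityDefect m u v w =
      -(2 : K)⁻¹ • jacobiator m u v w + (4 : K) • circAssociator m v w u +
        circLeibnizDefect m u v w + (2 : K) • circLeibnizDefect m v u w := by
  simp only [admissibilityDefect, jacobiator, circAssociator, circLeibnizDefect, br, circ,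
    map_add, map_sub, map_smul, LinearMap.add_apply, LinearMap.sub_apply,
    LinearMap.smul_apply, smul_add, smul_sub, smul_smul]
  module

theorem three_smul_jacobiator :
    (3 : K) • jacobiator m u v w =
      -admissibilityDefect m u v w + admissibilityDefect m u w v + admissibilityDefect m v u w
        - admissibilityDefect m v w u - admissibilityDefect m w u v
        + admissibilityDefect m w v u := by
  simp only [admissibilityDefect, jacobiator, br, map_sub, LinearMap.sub_apply, smul_add,
    smul_sub]
  module

theorem twelve_smul_circAssociator [CharZero K] :
    (12 : K) • circAssociator m u v w =
      -admissibilityDefect m u v w - admissibilityDefect m u w v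
        + admissibilityDefect m w u v + admissibilityDefect m w v u := by
  simp only [admissibilityDefect, circAssociator, br, circ, map_add, map_sub, map_smul,
    LinearMap.add_apply, LinearMap.sub_apply, LinearMap.smul_apply, smul_add, smul_sub,
    smul_smul]
  module

theorem six_smul_circLeibnizDefect [CharZero K] :
    (6 : K) • circLeibnizDefect m u v w =
      admissibilityDefect m u v w + admissibilityDefect m u w v + admissibilityDefect m v u w
        - admissibilityDefect m v w u + admissibilityDefect m w u v
        - admissibilityDefect m w v u := by
  simp only [admissibilityDefect, circLeibnizDefect, br, circ, map_add, map_sub, map_smul,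
    LinearMap.add_apply, LinearMap.sub_apply, LinearMap.smul_apply, smul_add, smul_sub,
    smul_smul]
  module

end

/-- `(A, ·)` is Poisson admissible iff
`[R_u, R_v] + L_{[u,v]} + 3[L_u, R_v] = 0` for all `u, v`. -/
theorem stmt0 {K V : Type*} [Field K] [CharZero K] [AddCommGroup V] [Module K V]
    (m : V →ₗ[K] V →ₗ[K] V) :
    PoissonAdmissible m ↔
      ∀ u v w : V,
        (m (m w v) u - m (m w u) v) + m (br m u v) w +
          (3 : K) • (m u (m w v) - m (m u w) v) = 0 := by
  change _ ↔ ∀ u v w, admissibilityDefect m u v w = 0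
  rw [poissonAdmissible_iff]
  constructor
  · rintro ⟨hJ, hA, hD⟩ u v w
    simp [admissibilityDefect_eq, hJ, hA, hD]
  · intro h
    refine ⟨fun u v w => ?_, fun u v w => ?_, fun u v w => ?_⟩
    · rw [← smul_eq_zero_iff_right (three_ne_zero' K), three_smul_jacobiator]
      simp [h]
    · rw [← smul_eq_zero_iff_right (by norm_num : (12 : K) ≠ 0), twelve_smul_circAssociator]
      simp [h]
    · rw [← smul_eq_zero_iff_right (by norm_num : (6 : K) ≠ 0), six_smul_circLeibnizDefect]
      simp [h]
end

section
/- An associative algebra (A, .) is Poisson admissible if and only if the associated Lie algebra (A, [,]) with [u,v] = u.v - v.u is 2-nilpotent, i.e., [[u,v],w] = 0 for all u,v,w in A. -/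
/-!
In an associative algebra the commutator bracket automatically satisfies the Jacobi identity and
each `ad_u` is a derivation of the symmetrized product, so Poisson admissibility reduces to
associativity of `∘`. Expanding both sides, the associator of `∘` is
`(u ∘ v) ∘ w - u ∘ (v ∘ w) = ¼ [[w, u], v]`, which vanishes identically iff `[[·,·],·] = 0`.
-/

section Associative

variable {K V : Type*} [Field K] [AddCommGroup V] [Module K V] {m : V →ₗ[K] V →ₗ[K] V}

theorem IsAssoc.br_jacobi (hassoc : IsAssoc m) (u v w : V) :
    br m u (br m v w) + br m v (br m w u) + br m w (br m u v) = 0 := by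
  simp only [br, map_sub, LinearMap.sub_apply, hassoc _ _ _]
  abel

theorem IsAssoc.br_circ_leibniz (hassoc : IsAssoc m) (u v w : V) :
    br m u (circ m v w) = circ m (br m u v) w + circ m v (br m u w) := by
  simp only [br, circ, map_sub, map_add, map_smul, LinearMap.sub_apply, LinearMap.add_apply,
    LinearMap.smul_apply, hassoc _ _ _]
  module

theorem IsAssoc.circ_associator (hassoc : IsAssoc m) (u v w : V) :
    circ m (circ m u v) w - circ m u (circ m v w) = (4 : K)⁻¹ • br m (br m w u) v := by
  simp only [br, circ, map_sub, map_add, map_smul, LinearMap.sub_apply, LinearMap.add_apply,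
    LinearMap.smul_apply, hassoc _ _ _]
  rw [show (4 : K)⁻¹ = 2⁻¹ * 2⁻¹ by rw [← mul_inv]; norm_num]
  module

theorem IsAssoc.circ_assoc_iff [NeZero (2 : K)] (hassoc : IsAssoc m) :
    (∀ u v w : V, circ m (circ m u v) w = circ m u (circ m v w)) ↔
      ∀ u v w : V, br m (br m u v) w = 0 := by
  have h4 : (4 : K)⁻¹ ≠ 0 := inv_ne_zero <| by
    rw [show (4 : K) = 2 * 2 by norm_num]
    exact mul_ne_zero two_ne_zero two_ne_zero
  simp only [← sub_eq_zero (b := circ m _ _), hassoc.circ_associator, smul_eq_zero, h4,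
    false_or]
  exact ⟨fun h u v w => h v w u, fun h u v w => h w u v⟩

end Associative

/-- an associative algebra is Poisson admissible iff its commutator
Lie algebra is 2-nilpotent, i.e. `[[u,v],w] = 0` for all `u,v,w`. -/
theorem stmt2 {K V : Type*} [Field K] [CharZero K] [AddCommGroup V] [Module K V]
    (m : V →ₗ[K] V →ₗ[K] V) (hassoc : IsAssoc m) :
    PoissonAdmissible m ↔ ∀ u v w : V, br m (br m u v) w = 0 := by
  rw [← hassoc.circ_assoc_iff]
  exact ⟨fun h => h.2.1, fun h => ⟨hassoc.br_jacobi, h, hassoc.br_circ_leibniz⟩⟩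
end

section
/- An algebra (A, .) is a symmetric Leibniz algebra if and only if for all u,v in A: [L_u, L_v] = L_{u.v} = -R_{u.v}, where L_u and R_u are left and right multiplications. -/
/-!
Both Leibniz identities with repeated arguments say that squares act trivially:
`(a.a).b = 0` and `b.(a.a) = 0`. Polarizing, `(a.b).c` and `c.(a.b)` are
antisymmetric in `a, b`. Summing the right Leibniz rule for `R_w` and the left one
for `L_w` on `u.v` then gives `(u.v).w + w.(u.v) = 0`, i.e. `L_{u.v} = -R_{u.v}`;
conversely, these antisymmetries turn the left Leibniz rule into the right one.
-/

section Leibniz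

variable {K V : Type*} [Field K] [AddCommGroup V] [Module K V] {m : V →ₗ[K] V →ₗ[K] V}

theorem leftLeibniz_iff_sub :
    LeftLeibniz m ↔ ∀ u v w : V, m u (m v w) - m v (m u w) = m (m u v) w := by
  simp only [LeftLeibniz, sub_eq_iff_eq_add]

theorem LeftLeibniz.isAlt_compr₂ (hL : LeftLeibniz m) (c : V) :
    (m.compr₂ (m.flip c)).IsAlt := fun a => by
  simpa using hL a a c

theorem RightLeibniz.isAlt_compr₂ (hR : RightLeibniz m) (c : V) :
    (m.compr₂ (m c)).IsAlt := fun a => by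
  simpa using hR a c a

theorem LeftLeibniz.mul_swap_mul (hL : LeftLeibniz m) (a b c : V) :
    m (m b a) c = -m (m a b) c := by
  simpa using ((hL.isAlt_compr₂ c).neg a b).symm

theorem RightLeibniz.mul_mul_swap (hR : RightLeibniz m) (a b c : V) :
    m c (m b a) = -m c (m a b) := by
  simpa using ((hR.isAlt_compr₂ c).neg a b).symm

theorem SymLeibniz.mul_mul_eq_neg (h : SymLeibniz m) (u v w : V) :
    m (m u v) w = -m w (m u v) := by
  obtain ⟨hL, hR⟩ := h
  refine eq_neg_of_add_eq_zero_left ?_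
  calc m (m u v) w + m w (m u v)
      = (m (m u w) v + m (m w u) v) + (m u (m v w) + m u (m w v)) := by
        rw [hR w u v, hL w u v]; abel
    _ = 0 := by rw [hL.mul_swap_mul u w, hR.mul_mul_swap v w]; abel

theorem LeftLeibniz.rightLeibniz (hL : LeftLeibniz m)
    (h : ∀ u v w : V, m (m u v) w = -m w (m u v)) : RightLeibniz m := by
  have mul_mul_swap (a b c : V) : m a (m c b) = -m a (m b c) := by
    rw [← neg_inj, ← h, ← h, hL.mul_swap_mul]
  intro u v w
  rw [h, hL u v w, hL.mul_swap_mul u v, mul_mul_swap v u w]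
  abel

end Leibniz

theorem stmt3_general {K V : Type*} [Field K] [AddCommGroup V] [Module K V]
    (m : V →ₗ[K] V →ₗ[K] V) :
    SymLeibniz m ↔
      ∀ u v w : V,
        m u (m v w) - m v (m u w) = m (m u v) w ∧ m (m u v) w = -m w (m u v) := by
  constructor
  · intro h u v w
    exact ⟨leftLeibniz_iff_sub.1 h.1 u v w, h.mul_mul_eq_neg u v w⟩
  · intro h
    have hL : LeftLeibniz m := leftLeibniz_iff_sub.2 fun u v w => (h u v w).1
    exact ⟨hL, hL.rightLeibniz fun u v w => (h u v w).2⟩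

/-- `(A, ·)` is symmetric Leibniz iff
`[L_u, L_v] = L_{u·v} = -R_{u·v}` for all `u, v`. -/
theorem stmt3 {K V : Type*} [Field K] [CharZero K] [AddCommGroup V] [Module K V]
    (m : V →ₗ[K] V →ₗ[K] V) :
    SymLeibniz m ↔
      ∀ u v w : V,
        m u (m v w) - m v (m u w) = m (m u v) w ∧ m (m u v) w = -m w (m u v) :=
  stmt3_general m
end

section
/- An algebra (A, .) is a symmetric Leibniz algebra if and only if for all u,v in A: [R_u, R_v] = R_{v.u} = -L_{v.u}. -/
section

variable {K V : Type*} [Field K] [AddCommGroup V] [Module K V] {m : V →ₗ[K] V →ₗ[K] V}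

theorem LeftLeibniz.mul_add_swap_mul_eq_zero (h : LeftLeibniz m) (x y z : V) :
    m (m x y) z + m (m y x) z = 0 := by
  linear_combination (norm := module) -h x y z - h y x z

theorem RightLeibniz.mul_add_mul_swap_eq_zero (h : RightLeibniz m) (x y z : V) :
    m x (m y z) + m x (m z y) = 0 := by
  linear_combination (norm := module) -h z x y - h y x z

theorem rightLeibniz_iff_commutator_right_mul :
    RightLeibniz m ↔ ∀ u v w : V, m (m w v) u - m (m w u) v = m w (m v u) := by
  refine ⟨fun h u v w => ?_, fun h u v w => ?_⟩
  · linear_combination (norm := module) h u w v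
  · linear_combination (norm := module) h u w v

theorem SymLeibniz.left_mul_mul_eq_neg_right (h : SymLeibniz m) (u v w : V) :
    m w (m v u) = -m (m v u) w := by
  linear_combination (norm := module) h.1 w v u + h.2 w v u +
    h.1.mul_add_swap_mul_eq_zero w v u + h.2.mul_add_mul_swap_eq_zero v w u

theorem RightLeibniz.leftLeibniz (hR : RightLeibniz m)
    (hLR : ∀ a b c : V, m a (m b c) = -m (m b c) a) : LeftLeibniz m := by
  -- `L_{xy+yx} = -R_{xy+yx}`, and `R_{xy+yx} = 0` by the right Leibniz identity.
  have hL_symm (x y z : V) : m (m x y) z + m (m y x) z = 0 := by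
    linear_combination (norm := module)
      hLR z x y + hLR z y x - hR.mul_add_mul_swap_eq_zero z x y
  intro u v w
  linear_combination (norm := module)
    hLR u v w - hR u v w - hL_symm u v w - hR.mul_add_mul_swap_eq_zero v w u

end

theorem stmt4_general {K V : Type*} [Field K] [AddCommGroup V] [Module K V]
    (m : V →ₗ[K] V →ₗ[K] V) :
    SymLeibniz m ↔
      ∀ u v w : V,
        m (m w v) u - m (m w u) v = m w (m v u) ∧ m w (m v u) = -m (m v u) w := by
  refine ⟨fun h u v w => ⟨rightLeibniz_iff_commutator_right_mul.1 h.2 u v w,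
    h.left_mul_mul_eq_neg_right u v w⟩, fun h => ?_⟩
  have hR : RightLeibniz m := rightLeibniz_iff_commutator_right_mul.2 fun u v w => (h u v w).1
  exact ⟨hR.leftLeibniz fun a b c => (h c b a).2, hR⟩

/-- `(A, ·)` is symmetric Leibniz iff
`[R_u, R_v] = R_{v·u} = -L_{v·u}` for all `u, v`. -/
theorem stmt4 {K V : Type*} [Field K] [CharZero K] [AddCommGroup V] [Module K V]
    (m : V →ₗ[K] V →ₗ[K] V) :
    SymLeibniz m ↔
      ∀ u v w : V,
        m (m w v) u - m (m w u) v = m w (m v u) ∧ m w (m v u) = -m (m v u) w :=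
  stmt4_general m
end

section
/- Every symmetric Leibniz algebra (A, .) is Poisson admissible: [u,v] := u.v - v.u is a Lie bracket, u∘v := (1/2)(u.v + v.u) is commutative and associative, and every ad_u is a derivation of ∘. -/
section

variable {K V : Type*} [Field K] [AddCommGroup V] [Module K V]

def IsDerivation (m : V →ₗ[K] V →ₗ[K] V) (D : V →ₗ[K] V) : Prop :=
  ∀ v w : V, D (m v w) = m (D v) w + m v (D w)

variable {m : V →ₗ[K] V →ₗ[K] V}

namespace IsDerivation

variable {D E : V →ₗ[K] V}

theorem sub (hD : IsDerivation m D) (hE : IsDerivation m E) : IsDerivation m (D - E) := by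
  intro v w
  simp only [LinearMap.sub_apply, hD v w, hE v w, map_sub]
  abel

theorem map_br (hD : IsDerivation m D) (v w : V) :
    D (br m v w) = br m (D v) w + br m v (D w) := by
  simp only [br, map_sub, hD v w, hD w v]
  abel

theorem map_circ (hD : IsDerivation m D) (v w : V) :
    D (circ m v w) = circ m (D v) w + circ m v (D w) := by
  simp only [circ, map_smul, map_add, hD v w, hD w v, ← smul_add]
  congr 1
  abel

end IsDerivation

theorem LeftLeibniz.isDerivation_mul (h : LeftLeibniz m) (u : V) : IsDerivation m (m u) :=
  h u

theorem RightLeibniz.isDerivation_mul_flip (h : RightLeibniz m) (u : V) :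
    IsDerivation m (m.flip u) :=
  h u

theorem br_eq_sub_flip_apply (u v : V) : br m u v = (m u - m.flip u) v :=
  rfl

theorem br_swap (u v : V) : br m v u = -br m u v :=
  (neg_sub _ _).symm

theorem br_neg_right (u v : V) : br m u (-v) = -br m u v := by
  simp only [br, map_neg, LinearMap.neg_apply]
  abel

theorem SymLeibniz.isDerivation_ad (h : SymLeibniz m) (u : V) :
    IsDerivation m (m u - m.flip u) :=
  (h.1.isDerivation_mul u).sub (h.2.isDerivation_mul_flip u)

theorem SymLeibniz.br_br (h : SymLeibniz m) (u v w : V) :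
    br m u (br m v w) = br m (br m u v) w + br m v (br m u w) := by
  simp only [br_eq_sub_flip_apply u]
  exact (h.isDerivation_ad u).map_br v w

theorem SymLeibniz.br_circ (h : SymLeibniz m) (u v w : V) :
    br m u (circ m v w) = circ m (br m u v) w + circ m v (br m u w) := by
  simp only [br_eq_sub_flip_apply u]
  exact (h.isDerivation_ad u).map_circ v w

theorem br_jacobi_of_leibniz
    (hm : ∀ u v w : V, br m u (br m v w) = br m (br m u v) w + br m v (br m u w))
    (u v w : V) : br m u (br m v w) + br m v (br m w u) + br m w (br m u v) = 0 := by
  rw [hm, br_swap w u, br_neg_right, br_swap w]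
  abel

theorem LeftLeibniz.mul_circ_left (h : LeftLeibniz m) (u v w : V) : m (circ m u v) w = 0 := by
  simp only [circ, map_smul, map_add, LinearMap.smul_apply, LinearMap.add_apply]
  linear_combination (norm := module) -(2 : K)⁻¹ • (h u v w + h v u w)

theorem RightLeibniz.mul_circ_right (h : RightLeibniz m) (u v w : V) : m w (circ m u v) = 0 := by
  simp only [circ, map_smul, map_add]
  linear_combination (norm := module) -(2 : K)⁻¹ • (h u w v + h v w u)

theorem circ_comm (u v : V) : circ m u v = circ m v u := by
  rw [circ, circ, add_comm]

theorem SymLeibniz.circ_circ_left (h : SymLeibniz m) (u v w : V) :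
    circ m (circ m u v) w = 0 := by
  rw [circ, h.1.mul_circ_left, h.2.mul_circ_right, add_zero, smul_zero]

theorem SymLeibniz.circ_assoc (h : SymLeibniz m) (u v w : V) :
    circ m (circ m u v) w = circ m u (circ m v w) := by
  rw [h.circ_circ_left, circ_comm u, h.circ_circ_left]

end

/-- every symmetric Leibniz algebra is Poisson admissible. -/
theorem stmt5 {K V : Type*} [Field K] [CharZero K] [AddCommGroup V] [Module K V]
    (m : V →ₗ[K] V →ₗ[K] V) (h : SymLeibniz m) :
    PoissonAdmissible m :=
  ⟨br_jacobi_of_leibniz h.br_br, h.circ_assoc, h.br_circ⟩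
end

section
/- Let (A, .) be a symmetric Leibniz algebra with induced Lie bracket [u,v] = u.v - v.u. Then for all u,v in A: ad_{[u,v]} = 2 L_{[u,v]} = 4 L_{u.v}, and the curvature K(u,v) := [L_u, L_v] - L_{[u,v]} equals L_{v.u}. -/
/-!
Left Leibniz alone gives `(u·v)·w + (v·u)·w = 0` (add the identity for `u, v` to the one for
`v, u`), so `L_{[u,v]} = 2 L_{u·v}` and `[L_u, L_v] = L_{u·v} = -L_{v·u}`. Adding right Leibniz
shows that `w·(u·v) = -(u·v)·w`, hence `R_{[u,v]} = -L_{[u,v]}` and `ad_{[u,v]} = 2 L_{[u,v]}`.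
-/

section SymLeibniz

variable {K V : Type*} [Field K] [AddCommGroup V] [Module K V] {m : V →ₗ[K] V →ₗ[K] V}

theorem LeftLeibniz.mul_swap_left (hl : LeftLeibniz m) (u v w : V) :
    m (m v u) w = -m (m u v) w := by
  linear_combination (norm := module) -hl u v w - hl v u w

theorem LeftLeibniz.br_left (hl : LeftLeibniz m) (u v w : V) :
    m (br m u v) w = (2 : K) • m (m u v) w := by
  rw [br, map_sub, LinearMap.sub_apply, hl.mul_swap_left]
  module

theorem LeftLeibniz.curvature_eq (hl : LeftLeibniz m) (u v w : V) :
    m u (m v w) - m v (m u w) - m (br m u v) w = m (m v u) w := by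
  rw [hl.br_left, hl.mul_swap_left u v w]
  linear_combination (norm := module) hl u v w

theorem SymLeibniz.mul_apply_mul (h : SymLeibniz m) (u v w : V) :
    m w (m u v) = -m (m u v) w := by
  linear_combination (norm := module) -h.2 v u w - h.1 u w v

theorem SymLeibniz.mul_apply_br (h : SymLeibniz m) (u v w : V) :
    m w (br m u v) = -m (br m u v) w := by
  simp only [br, map_sub, LinearMap.sub_apply, h.mul_apply_mul]
  module

end SymLeibniz

theorem stmt6_general {K V : Type*} [Field K] [AddCommGroup V] [Module K V]
    (m : V →ₗ[K] V →ₗ[K] V) (h : SymLeibniz m) :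
    ∀ u v w : V,
      (m (br m u v) w - m w (br m u v) = (2 : K) • m (br m u v) w) ∧
      ((2 : K) • m (br m u v) w = (4 : K) • m (m u v) w) ∧
      (m u (m v w) - m v (m u w) - m (br m u v) w = m (m v u) w) := by
  intro u v w
  refine ⟨?_, ?_, h.1.curvature_eq u v w⟩
  · rw [h.mul_apply_br]
    module
  · rw [h.1.br_left, smul_smul]
    norm_num

/-- in a symmetric Leibniz algebra, `ad_{[u,v]} = 2 L_{[u,v]} = 4 L_{u·v}`
and the curvature `K(u,v) = [L_u, L_v] - L_{[u,v]}` equals `L_{v·u}`. -/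
theorem stmt6 {K V : Type*} [Field K] [CharZero K] [AddCommGroup V] [Module K V]
    (m : V →ₗ[K] V →ₗ[K] V) (h : SymLeibniz m) :
    ∀ u v w : V,
      (m (br m u v) w - m w (br m u v) = (2 : K) • m (br m u v) w) ∧
      ((2 : K) • m (br m u v) w = (4 : K) • m (m u v) w) ∧
      (m u (m v w) - m v (m u w) - m (br m u v) w = m (m v u) w) :=
  stmt6_general m h
end

section
/- Let (A, .) be a symmetric Leibniz algebra. Then the curvature K(u,v) = [L_u, L_v] - L_{[u,v]} is parallel, i.e., for all u,v,w in A: [L_u, K(v,w)] - K(u.v, w) - K(v, u.w) = 0. -/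
/-- The curvature operator `K(u,v) = [L_u, L_v] - L_{[u,v]}` applied to `x`. -/
def curv {K V : Type*} [Field K] [AddCommGroup V] [Module K V]
    (m : V →ₗ[K] V →ₗ[K] V) (u v x : V) : V :=
  m u (m v x) - m v (m u x) - m (br m u v) x

namespace LeftLeibniz

variable {K V : Type*} [Field K] [AddCommGroup V] [Module K V] {m : V →ₗ[K] V →ₗ[K] V}

theorem commutator_eq (hm : LeftLeibniz m) (u v x : V) :
    m u (m v x) - m v (m u x) = m (m u v) x := by
  rw [hm u v x, add_sub_cancel_right]

theorem curv_eq (hm : LeftLeibniz m) (u v x : V) : curv m u v x = m (m v u) x := by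
  rw [curv, hm.commutator_eq, br, map_sub, LinearMap.sub_apply, sub_sub_cancel]

end LeftLeibniz

theorem stmt7_general {K V : Type*} [Field K] [AddCommGroup V] [Module K V]
    (m : V →ₗ[K] V →ₗ[K] V) (h : SymLeibniz m) :
    ∀ u v w x : V,
      m u (curv m v w x) - curv m v w (m u x) - curv m (m u v) w x
        - curv m v (m u w) x = 0 := by
  intro u v w x
  have hl : LeftLeibniz m := h.1
  simp only [hl.curv_eq]
  rw [hl.commutator_eq, hl u w v, map_add, LinearMap.add_apply]
  abel

/-- in a symmetric Leibniz algebra the curvature is parallel: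
`[L_u, K(v,w)] - K(u·v, w) - K(v, u·w) = 0`. -/
theorem stmt7 {K V : Type*} [Field K] [CharZero K] [AddCommGroup V] [Module K V]
    (m : V →ₗ[K] V →ₗ[K] V) (h : SymLeibniz m) :
    ∀ u v w x : V,
      m u (curv m v w x) - curv m v w (m u x) - curv m (m u v) w x
        - curv m v (m u w) x = 0 :=
  stmt7_general m h
end

section
/- A left Leibniz algebra (A, .) is Poisson admissible if and only if it is a symmetric Leibniz algebra. -/
/-!
Measure how far `L_u` and `R_u` are from being derivations by the trilinear defects
`DL(u,v,w) = u(vw) - (uv)w - v(uw)` and `DR(u,v,w) = (vw)u - (vu)w - v(wu)`.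
For an arbitrary bilinear product, the Jacobiator `J` of the commutator, the defect `D` of `ad_u`
as a derivation of `∘`, and the associator of `∘` are explicit linear combinations of `DL` and
`DR`; conversely `DL - DR = ½ J + D`. So `DL = DR = 0` forces all three to vanish, and `DL = 0`,
`J = 0`, `D = 0` force `DR = 0`.
-/

section Defects

variable {K V : Type*} [Field K] [AddCommGroup V] [Module K V] (m : V →ₗ[K] V →ₗ[K] V)

def leftDefect (u v w : V) : V :=
  m u (m v w) - (m (m u v) w + m v (m u w))

def rightDefect (u v w : V) : V :=
  m (m v w) u - (m (m v u) w + m v (m w u))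

theorem leftLeibniz_iff_leftDefect_eq_zero :
    LeftLeibniz m ↔ ∀ u v w, leftDefect m u v w = 0 := by
  simp only [LeftLeibniz, leftDefect, sub_eq_zero]

theorem rightLeibniz_iff_rightDefect_eq_zero :
    RightLeibniz m ↔ ∀ u v w, rightDefect m u v w = 0 := by
  simp only [RightLeibniz, rightDefect, sub_eq_zero]

theorem br_jacobi_eq_defects (u v w : V) :
    br m u (br m v w) + br m v (br m w u) + br m w (br m u v) =
      (leftDefect m u v w - rightDefect m u v w) - (leftDefect m u w v - rightDefect m u w v) := by
  simp only [br, leftDefect, rightDefect, map_sub, LinearMap.sub_apply]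
  module

theorem br_circ_sub_eq_defects (u v w : V) :
    br m u (circ m v w) - (circ m (br m u v) w + circ m v (br m u w)) =
      (2 : K)⁻¹ • ((leftDefect m u v w - rightDefect m u v w) +
        (leftDefect m u w v - rightDefect m u w v)) := by
  simp only [br, circ, leftDefect, rightDefect, map_add, map_sub, map_smul, LinearMap.add_apply,
    LinearMap.sub_apply, LinearMap.smul_apply]
  module

theorem circ_assoc_sub_eq_defects (u v w : V) :
    circ m (circ m u v) w - circ m u (circ m v w) =
      ((2 : K)⁻¹ * (2 : K)⁻¹) • (leftDefect m w v u - leftDefect m u w v +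
        rightDefect m w u v - rightDefect m u v w) := by
  simp only [circ, leftDefect, rightDefect, map_add, map_smul, LinearMap.add_apply,
    LinearMap.smul_apply]
  module

theorem leftDefect_sub_rightDefect_eq [NeZero (2 : K)] (u v w : V) :
    leftDefect m u v w - rightDefect m u v w =
      (2 : K)⁻¹ • (br m u (br m v w) + br m v (br m w u) + br m w (br m u v)) +
        (br m u (circ m v w) - (circ m (br m u v) w + circ m v (br m u w))) := by
  rw [br_jacobi_eq_defects, br_circ_sub_eq_defects, ← smul_add]
  match_scalars <;> field_simp <;> ring

end Defects

section Criteria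

variable {K V : Type*} [Field K] [AddCommGroup V] [Module K V] {m : V →ₗ[K] V →ₗ[K] V}

theorem SymLeibniz.poissonAdmissible [CharZero K] (h : SymLeibniz m) : PoissonAdmissible m := by
  have hL := (leftLeibniz_iff_leftDefect_eq_zero m).1 h.1
  have hR := (rightLeibniz_iff_rightDefect_eq_zero m).1 h.2
  refine ⟨fun u v w => ?_, fun u v w => ?_, fun u v w => ?_⟩
  · simp [br_jacobi_eq_defects, hL, hR]
  · simpa [hL, hR, sub_eq_zero] using circ_assoc_sub_eq_defects m u v w
  · simpa [hL, hR, sub_eq_zero] using br_circ_sub_eq_defects m u v w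

theorem LeftLeibniz.rightLeibniz_s8 [NeZero (2 : K)] (h : LeftLeibniz m)
    (hjac : ∀ u v w, br m u (br m v w) + br m v (br m w u) + br m w (br m u v) = 0)
    (hder : ∀ u v w, br m u (circ m v w) = circ m (br m u v) w + circ m v (br m u w)) :
    RightLeibniz m := by
  refine (rightLeibniz_iff_rightDefect_eq_zero m).2 fun u v w => ?_
  have := leftDefect_sub_rightDefect_eq m u v w
  rwa [(leftLeibniz_iff_leftDefect_eq_zero m).1 h, hjac, hder, sub_self, smul_zero, add_zero,
    zero_sub, neg_eq_zero] at this

end Criteria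

/-- a left Leibniz algebra is Poisson admissible iff it is a
symmetric Leibniz algebra. -/
theorem stmt8 {K V : Type*} [Field K] [CharZero K] [AddCommGroup V] [Module K V]
    (m : V →ₗ[K] V →ₗ[K] V) (h : LeftLeibniz m) :
    PoissonAdmissible m ↔ SymLeibniz m :=
  ⟨fun ⟨hjac, _, hder⟩ => ⟨h, h.rightLeibniz_s8 hjac hder⟩, SymLeibniz.poissonAdmissible⟩
end

section
/- Let A be a symmetric Leibniz algebra and U an associative LR-algebra (associative with [L_a, L_b] = [R_a, R_b] = 0 for all a,b). Then the tensor product A ⊗ U with product (u⊗a)(v⊗b) = (uv)⊗(ab) is a symmetric Leibniz algebra. -/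
open TensorProduct

theorem TensorProduct.ext₃' {R M₁ N₁ M₂ N₂ M₃ N₃ P : Type*} [CommSemiring R]
    [AddCommMonoid M₁] [AddCommMonoid N₁] [AddCommMonoid M₂] [AddCommMonoid N₂]
    [AddCommMonoid M₃] [AddCommMonoid N₃] [AddCommMonoid P]
    [Module R M₁] [Module R N₁] [Module R M₂] [Module R N₂] [Module R M₃] [Module R N₃]
    [Module R P] {f g : M₁ ⊗[R] N₁ →ₗ[R] M₂ ⊗[R] N₂ →ₗ[R] M₃ ⊗[R] N₃ →ₗ[R] P}
    (h : ∀ x₁ y₁ x₂ y₂ x₃ y₃,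
      f (x₁ ⊗ₜ y₁) (x₂ ⊗ₜ y₂) (x₃ ⊗ₜ y₃) = g (x₁ ⊗ₜ y₁) (x₂ ⊗ₜ y₂) (x₃ ⊗ₜ y₃)) :
    f = g :=
  ext' fun _ _ => ext' fun _ _ => ext' fun _ _ => h _ _ _ _ _ _

section NestedMul

variable {K V : Type*} [CommSemiring K] [AddCommMonoid V] [Module K V] (m : V →ₗ[K] V →ₗ[K] V)

def nestedMulRight : V →ₗ[K] V →ₗ[K] V →ₗ[K] V :=
  (LinearMap.llcomp K V V V ∘ₗ m).compl₂ m

def nestedMulLeft : V →ₗ[K] V →ₗ[K] V →ₗ[K] V :=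
  m.compr₂ m

@[simp]
theorem nestedMulRight_apply (u v w : V) : nestedMulRight m u v w = m u (m v w) := rfl

@[simp]
theorem nestedMulLeft_apply (u v w : V) : nestedMulLeft m u v w = m (m u v) w := rfl

end NestedMul

section

variable {K V : Type*} [Field K] [AddCommGroup V] [Module K V] {m : V →ₗ[K] V →ₗ[K] V}

theorem leftLeibniz_iff :
    LeftLeibniz m ↔ nestedMulRight m = nestedMulLeft m + (nestedMulRight m).flip := by
  simp only [LeftLeibniz, LinearMap.ext_iff]
  rfl

theorem rightLeibniz_iff :
    RightLeibniz m ↔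
      nestedMulLeft m = LinearMap.lflip.toLinearMap ∘ₗ nestedMulLeft m + nestedMulRight m := by
  simp only [RightLeibniz, LinearMap.ext_iff, LinearMap.add_apply, LinearMap.comp_apply,
    LinearEquiv.coe_coe, LinearMap.lflip_apply, LinearMap.flip_apply, nestedMulLeft_apply,
    nestedMulRight_apply]
  exact ⟨fun h v w u => h u v w, fun h u v w => h v w u⟩

end

section

variable {K A U : Type*} [Field K] [AddCommGroup A] [Module K A] [AddCommGroup U] [Module K U]
  {mA : A →ₗ[K] A →ₗ[K] A} {mU : U →ₗ[K] U →ₗ[K] U}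
  {μ : A ⊗[K] U →ₗ[K] A ⊗[K] U →ₗ[K] A ⊗[K] U}

theorem LeftLeibniz.tensorProduct (hA : LeftLeibniz mA) (hassoc : IsAssoc mU)
    (hcomm : ∀ a b c : U, mU a (mU b c) = mU b (mU a c))
    (hμ : ∀ (u v : A) (a b : U), μ (u ⊗ₜ a) (v ⊗ₜ b) = mA u v ⊗ₜ mU a b) :
    LeftLeibniz μ := by
  rw [leftLeibniz_iff]
  refine TensorProduct.ext₃' fun u a v b w c => ?_
  simp only [nestedMulRight_apply, nestedMulLeft_apply, LinearMap.add_apply,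
    LinearMap.flip_apply, hμ]
  rw [hA u v w, hassoc, hcomm a b c, add_tmul]

theorem RightLeibniz.tensorProduct (hA : RightLeibniz mA) (hassoc : IsAssoc mU)
    (hcomm : ∀ a b c : U, mU (mU c a) b = mU (mU c b) a)
    (hμ : ∀ (u v : A) (a b : U), μ (u ⊗ₜ a) (v ⊗ₜ b) = mA u v ⊗ₜ mU a b) :
    RightLeibniz μ := by
  rw [rightLeibniz_iff]
  refine TensorProduct.ext₃' fun v b w c u a => ?_
  simp only [nestedMulRight_apply, nestedMulLeft_apply, LinearMap.add_apply, LinearMap.comp_apply,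
    LinearEquiv.coe_coe, LinearMap.lflip_apply, LinearMap.flip_apply, hμ]
  rw [hA u v w, ← hassoc b c a, hcomm c a b, add_tmul]

end

open TensorProduct in
theorem stmt9_general {K A U : Type*} [Field K]
    [AddCommGroup A] [Module K A] [AddCommGroup U] [Module K U]
    (mA : A →ₗ[K] A →ₗ[K] A) (mU : U →ₗ[K] U →ₗ[K] U)
    (hA : SymLeibniz mA) (hUassoc : IsAssoc mU) (hULR : LRAlg mU)
    (μ : (A ⊗[K] U) →ₗ[K] (A ⊗[K] U) →ₗ[K] (A ⊗[K] U))
    (hμ : ∀ (u v : A) (a b : U), μ (u ⊗ₜ a) (v ⊗ₜ b) = (mA u v) ⊗ₜ (mU a b)) :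
    SymLeibniz μ :=
  ⟨hA.1.tensorProduct hUassoc hULR.1 hμ, hA.2.tensorProduct hUassoc hULR.2 hμ⟩

open TensorProduct in
/-- if `A` is a symmetric Leibniz algebra and `U` is an associative
LR-algebra, then `A ⊗ U` with the product `(u⊗a)(v⊗b) = (uv)⊗(ab)` is a symmetric
Leibniz algebra. -/
theorem stmt9 {K A U : Type*} [Field K] [CharZero K]
    [AddCommGroup A] [Module K A] [AddCommGroup U] [Module K U]
    (mA : A →ₗ[K] A →ₗ[K] A) (mU : U →ₗ[K] U →ₗ[K] U)
    (hA : SymLeibniz mA) (hUassoc : IsAssoc mU) (hULR : LRAlg mU)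
    (μ : (A ⊗[K] U) →ₗ[K] (A ⊗[K] U) →ₗ[K] (A ⊗[K] U))
    (hμ : ∀ (u v : A) (a b : U), μ (u ⊗ₜ a) (v ⊗ₜ b) = (mA u v) ⊗ₜ (mU a b)) :
    SymLeibniz μ :=
  stmt9_general mA mU hA hUassoc hULR μ hμ
end

section
/- Let (A, .) be a Poisson admissible algebra and U an associative LR-algebra. Then the product on A ⊗ U given by (u⊗a) ⋆ (v⊗b) = (1/2)[u,v]⊗(ab+ba) + (1/2)(u.v)⊗(3ab+ba) makes A ⊗ U a Poisson admissible algebra. -/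
section stmt10helpers

variable {K V : Type*} [Field K] [AddCommGroup V] [Module K V] (m : V →ₗ[K] V →ₗ[K] V)

lemma br_add_left' (x x' y : V) : br m (x + x') y = br m x y + br m x' y := by
  simp only [br, map_add, LinearMap.add_apply]; abel

lemma br_add_right' (x y y' : V) : br m x (y + y') = br m x y + br m x y' := by
  simp only [br, map_add, LinearMap.add_apply]; abel

lemma br_smul_left' (c : K) (x y : V) : br m (c • x) y = c • br m x y := by
  simp only [br, map_smul, LinearMap.smul_apply]; module

lemma br_smul_right' (c : K) (x y : V) : br m x (c • y) = c • br m x y := by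
  simp only [br, map_smul, LinearMap.smul_apply]; module

lemma circ_add_left' (x x' y : V) : circ m (x + x') y = circ m x y + circ m x' y := by
  simp only [circ, map_add, LinearMap.add_apply]; module

lemma circ_add_right' (x y y' : V) : circ m x (y + y') = circ m x y + circ m x y' := by
  simp only [circ, map_add, LinearMap.add_apply]; module

lemma circ_smul_left' (c : K) (x y : V) : circ m (c • x) y = c • circ m x y := by
  simp only [circ, map_smul, LinearMap.smul_apply]; module

lemma circ_smul_right' (c : K) (x y : V) : circ m x (c • y) = c • circ m x y := by
  simp only [circ, map_smul, LinearMap.smul_apply]; module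

open TensorProduct in
lemma tri_aux {K A U W : Type*} [Field K] [AddCommGroup A] [Module K A]
    [AddCommGroup U] [Module K U] [AddCommGroup W] [Module K W]
    (f : (A ⊗[K] U) → (A ⊗[K] U) → (A ⊗[K] U) → W)
    (h1 : ∀ x x' y z, f (x + x') y z = f x y z + f x' y z)
    (h2 : ∀ x y y' z, f x (y + y') z = f x y z + f x y' z)
    (h3 : ∀ x y z z', f x y (z + z') = f x y z + f x y z')
    (hp : ∀ u a v b w c, f (u ⊗ₜ a) (v ⊗ₜ b) (w ⊗ₜ c) = 0) :
    ∀ x y z, f x y z = 0 := by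
  have z1 : ∀ y z, f 0 y z = 0 := fun y z => by
    have h := h1 0 0 y z; rw [add_zero] at h; exact (left_eq_add.mp h)
  have z2 : ∀ x z, f x 0 z = 0 := fun x z => by
    have h := h2 x 0 0 z; rw [add_zero] at h; exact (left_eq_add.mp h)
  have z3 : ∀ x y, f x y 0 = 0 := fun x y => by
    have h := h3 x y 0 0; rw [add_zero] at h; exact (left_eq_add.mp h)
  intro x
  induction x using TensorProduct.induction_on with
  | zero => exact fun y z => z1 y z
  | tmul u a =>
    intro y
    induction y using TensorProduct.induction_on with
    | zero => exact fun z => z2 _ z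
    | tmul v b =>
      intro z
      induction z using TensorProduct.induction_on with
      | zero => exact z3 _ _
      | tmul w c => exact hp u a v b w c
      | add p q ih1 ih2 => rw [h3, ih1, ih2, add_zero]
    | add p q ih1 ih2 => intro z; rw [h2, ih1 z, ih2 z, add_zero]
  | add p q ih1 ih2 => intro y z; rw [h1, ih1 y z, ih2 y z, add_zero]

end stmt10helpers

open TensorProduct in
/-- if `A` is Poisson admissible and `U` is an associative LR-algebra,
then `A ⊗ U` with the product
`(u⊗a) ⋆ (v⊗b) = (1/2)[u,v]⊗(ab+ba) + (1/2)(u·v)⊗(3ab+ba)` is Poisson admissible. -/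
theorem stmt10 {K A U : Type*} [Field K] [CharZero K]
    [AddCommGroup A] [Module K A] [AddCommGroup U] [Module K U]
    (mA : A →ₗ[K] A →ₗ[K] A) (mU : U →ₗ[K] U →ₗ[K] U)
    (hA : PoissonAdmissible mA) (hUassoc : IsAssoc mU) (hULR : LRAlg mU)
    (μ : (A ⊗[K] U) →ₗ[K] (A ⊗[K] U) →ₗ[K] (A ⊗[K] U))
    (hμ : ∀ (u v : A) (a b : U),
      μ (u ⊗ₜ a) (v ⊗ₜ b) =
        (2 : K)⁻¹ • ((br mA u v) ⊗ₜ (mU a b + mU b a)) +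
          (2 : K)⁻¹ • ((mA u v) ⊗ₜ ((3 : K) • mU a b + mU b a))) :
    PoissonAdmissible μ := by
  obtain ⟨hJ, hS, hL⟩ := hA
  -- U-algebra: all triple products coincide
  have u3 : ∀ a b c : U, mU a (mU c b) = mU a (mU b c) := fun a b c => by
    rw [← hUassoc, hULR.2, hUassoc]
  have u2 : ∀ a b c : U, mU b (mU a c) = mU a (mU b c) := fun a b c => (hULR.1 a b c).symm
  have n1 : ∀ a b c : U, mU b (mU c a) = mU a (mU b c) := fun a b c => by rw [u3 b a c, u2]
  have n2 : ∀ a b c : U, mU c (mU a b) = mU a (mU b c) := fun a b c => by rw [u2 a c b, u3]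
  have n3 : ∀ a b c : U, mU c (mU b a) = mU a (mU b c) := fun a b c => by rw [u3 c a b, n2]
  have l1 : ∀ a b c : U, mU (mU a b) c = mU a (mU b c) := hUassoc
  have e_bc_a : ∀ a b c : U, mU (mU b c) a = mU a (mU b c) := fun a b c => by rw [l1 b c a, n1]
  have e_cb_a : ∀ a b c : U, mU (mU c b) a = mU a (mU b c) := fun a b c => by rw [l1 c b a, n3]
  have e_ba_c : ∀ a b c : U, mU (mU b a) c = mU a (mU b c) := fun a b c => by rw [l1 b a c, u2]
  have f1 : ∀ a b c : U, mU a (mU b c + mU c b) + mU (mU b c + mU c b) a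
      = (4:K) • mU a (mU b c) := fun a b c => by
    simp only [map_add, LinearMap.add_apply, u3 a b c, e_bc_a a b c, e_cb_a a b c]; module
  have f2 : ∀ a b c : U, mU a (mU b c + mU c b) - mU (mU b c + mU c b) a = 0 := fun a b c => by
    simp only [map_add, LinearMap.add_apply, u3 a b c, e_bc_a a b c, e_cb_a a b c]; abel
  have f3 : ∀ a b c : U, mU a (mU b c - mU c b) + mU (mU b c - mU c b) a = 0 := fun a b c => by
    simp only [map_sub, LinearMap.sub_apply, u3 a b c, e_bc_a a b c, e_cb_a a b c]; abel
  have f4 : ∀ a b c : U, mU a (mU b c - mU c b) - mU (mU b c - mU c b) a = 0 := fun a b c => by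
    simp only [map_sub, LinearMap.sub_apply, u3 a b c, e_bc_a a b c, e_cb_a a b c]; abel
  have g1 : ∀ a b c : U, mU (mU a b + mU b a) c + mU c (mU a b + mU b a)
      = (4:K) • mU a (mU b c) := fun a b c => by
    simp only [map_add, LinearMap.add_apply, l1 a b c, e_ba_c a b c, n2 a b c, n3 a b c]; module
  have g2 : ∀ a b c : U, mU (mU a b + mU b a) c - mU c (mU a b + mU b a) = 0 := fun a b c => by
    simp only [map_add, LinearMap.add_apply, l1 a b c, e_ba_c a b c, n2 a b c, n3 a b c]; abel
  have g3 : ∀ a b c : U, mU (mU a b - mU b a) c + mU c (mU a b - mU b a) = 0 := fun a b c => by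
    simp only [map_sub, LinearMap.sub_apply, l1 a b c, e_ba_c a b c, n2 a b c, n3 a b c]; abel
  have g4 : ∀ a b c : U, mU (mU a b - mU b a) c - mU c (mU a b - mU b a) = 0 := fun a b c => by
    simp only [map_sub, LinearMap.sub_apply, l1 a b c, e_ba_c a b c, n2 a b c, n3 a b c]; abel
  -- formulas for the bracket and circle product on pure tensors
  have hbr : ∀ (u v : A) (a b : U), br μ (u ⊗ₜ[K] a) (v ⊗ₜ[K] b)
      = (2:K) • (br mA u v ⊗ₜ[K] (mU a b + mU b a))
        + (circ mA u v ⊗ₜ[K] (mU a b - mU b a)) := by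
    intro u v a b
    simp only [br, circ, hμ]
    simp only [tmul_add, add_tmul, tmul_sub, sub_tmul, tmul_smul, ← smul_tmul',
      smul_add, smul_sub]
    match_scalars <;> (field_simp; try ring)
  have hcirc : ∀ (u v : A) (a b : U), circ μ (u ⊗ₜ[K] a) (v ⊗ₜ[K] b)
      = (circ mA u v ⊗ₜ[K] (mU a b + mU b a))
        + (4:K)⁻¹ • (br mA u v ⊗ₜ[K] (mU a b - mU b a)) := by
    intro u v a b
    simp only [br, circ, hμ]
    simp only [tmul_add, add_tmul, tmul_sub, sub_tmul, tmul_smul, ← smul_tmul',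
      smul_add, smul_sub]
    match_scalars <;> (field_simp; try ring)
  -- nested products on pure tensors
  have brbr : ∀ (u v w : A) (a b c : U),
      br μ (u ⊗ₜ[K] a) (br μ (v ⊗ₜ[K] b) (w ⊗ₜ[K] c))
        = (16:K) • (br mA u (br mA v w) ⊗ₜ[K] mU a (mU b c)) := by
    intro u v w a b c
    rw [hbr v w b c, br_add_right', br_smul_right', hbr, hbr,
      f1 a b c, f2 a b c, f3 a b c, f4 a b c]
    simp only [tmul_zero, tmul_smul, smul_zero, add_zero, zero_add]
    try module
  have cc1 : ∀ (u v w : A) (a b c : U),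
      circ μ (circ μ (u ⊗ₜ[K] a) (v ⊗ₜ[K] b)) (w ⊗ₜ[K] c)
        = (4:K) • (circ mA (circ mA u v) w ⊗ₜ[K] mU a (mU b c)) := by
    intro u v w a b c
    rw [hcirc u v a b, circ_add_left', circ_smul_left', hcirc, hcirc,
      g1 a b c, g2 a b c, g3 a b c, g4 a b c]
    simp only [tmul_zero, tmul_smul, smul_zero, add_zero, zero_add]
    try module
  have cc2 : ∀ (u v w : A) (a b c : U),
      circ μ (u ⊗ₜ[K] a) (circ μ (v ⊗ₜ[K] b) (w ⊗ₜ[K] c))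
        = (4:K) • (circ mA u (circ mA v w) ⊗ₜ[K] mU a (mU b c)) := by
    intro u v w a b c
    rw [hcirc v w b c, circ_add_right', circ_smul_right', hcirc, hcirc,
      f1 a b c, f2 a b c, f3 a b c, f4 a b c]
    simp only [tmul_zero, tmul_smul, smul_zero, add_zero, zero_add]
    try module
  have brc : ∀ (u v w : A) (a b c : U),
      br μ (u ⊗ₜ[K] a) (circ μ (v ⊗ₜ[K] b) (w ⊗ₜ[K] c))
        = (8:K) • (br mA u (circ mA v w) ⊗ₜ[K] mU a (mU b c)) := by
    intro u v w a b c
    rw [hcirc v w b c, br_add_right', br_smul_right', hbr, hbr,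
      f1 a b c, f2 a b c, f3 a b c, f4 a b c]
    simp only [tmul_zero, tmul_smul, smul_zero, add_zero, zero_add]
    try module
  have cbr1 : ∀ (u v w : A) (a b c : U),
      circ μ (br μ (u ⊗ₜ[K] a) (v ⊗ₜ[K] b)) (w ⊗ₜ[K] c)
        = (8:K) • (circ mA (br mA u v) w ⊗ₜ[K] mU a (mU b c)) := by
    intro u v w a b c
    rw [hbr u v a b, circ_add_left', circ_smul_left', hcirc, hcirc,
      g1 a b c, g2 a b c, g3 a b c, g4 a b c]
    simp only [tmul_zero, tmul_smul, smul_zero, add_zero, zero_add]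
    try module
  have cbr2 : ∀ (u v w : A) (a b c : U),
      circ μ (v ⊗ₜ[K] b) (br μ (u ⊗ₜ[K] a) (w ⊗ₜ[K] c))
        = (8:K) • (circ mA v (br mA u w) ⊗ₜ[K] mU a (mU b c)) := by
    intro u v w a b c
    rw [hbr u w a c, circ_add_right', circ_smul_right', hcirc, hcirc,
      f1 b a c, f2 b a c, f3 b a c, f4 b a c, u2 a b c]
    simp only [tmul_zero, tmul_smul, smul_zero, add_zero, zero_add]
    try module
  refine ⟨?_, ?_, ?_⟩
  · -- Jacobi identity
    apply tri_aux (f := fun x y z => br μ x (br μ y z) + br μ y (br μ z x) + br μ z (br μ x y))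
    · intro x x' y z; simp only [br_add_left', br_add_right']; abel
    · intro x y y' z; simp only [br_add_left', br_add_right']; abel
    · intro x y z z'; simp only [br_add_left', br_add_right']; abel
    · intro u a v b w c
      rw [brbr u v w a b c, brbr v w u b c a, brbr w u v c a b, n1 a b c, n2 a b c]
      have hc : (16:K) • (br mA u (br mA v w) ⊗ₜ[K] mU a (mU b c))
            + (16:K) • (br mA v (br mA w u) ⊗ₜ[K] mU a (mU b c))
            + (16:K) • (br mA w (br mA u v) ⊗ₜ[K] mU a (mU b c))
          = (16:K) • ((br mA u (br mA v w) + br mA v (br mA w u) + br mA w (br mA u v))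
              ⊗ₜ[K] mU a (mU b c)) := by
        rw [add_tmul, add_tmul]; module
      rw [hc, hJ u v w, zero_tmul, smul_zero]
  · -- associativity of the symmetrized product
    intro x y z
    have := tri_aux (f := fun x y z => circ μ (circ μ x y) z - circ μ x (circ μ y z))
      (by intro x x' y z; simp only [circ_add_left', circ_add_right']; abel)
      (by intro x y y' z; simp only [circ_add_left', circ_add_right']; abel)
      (by intro x y z z'; simp only [circ_add_left', circ_add_right']; abel)
      (by intro u a v b w c
          beta_reduce
          rw [cc1 u v w a b c, cc2 u v w a b c, hS u v w, sub_self])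
      x y z
    simpa [sub_eq_zero] using this
  · -- Leibniz rule
    intro x y z
    have := tri_aux (f := fun x y z =>
        br μ x (circ μ y z) - circ μ (br μ x y) z - circ μ y (br μ x z))
      (by intro x x' y z
          simp only [br_add_left', br_add_right', circ_add_left', circ_add_right']; abel)
      (by intro x y y' z
          simp only [br_add_left', br_add_right', circ_add_left', circ_add_right']; abel)
      (by intro x y z z'
          simp only [br_add_left', br_add_right', circ_add_left', circ_add_right']; abel)
      (by intro u a v b w c
          beta_reduce
          rw [brc u v w a b c, cbr1 u v w a b c, cbr2 u v w a b c, hL u v w, add_tmul]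
          module)
      x y z
    rw [sub_sub, sub_eq_zero] at this
    rw [this]
end

section
/- An LR-algebra (A, .) is Poisson admissible if and only if it is associative. -/
section

variable {K V : Type*} [Field K] [AddCommGroup V] [Module K V] {m : V →ₗ[K] V →ₗ[K] V}

theorem br_jacobi_of_isAssoc (ha : IsAssoc m) (u v w : V) :
    br m u (br m v w) + br m v (br m w u) + br m w (br m u v) = 0 := by
  simp only [br, map_sub, LinearMap.sub_apply]
  linear_combination (norm := module) -ha v w u + ha w v u - ha w u v + ha u w v
    - ha u v w + ha v u w

theorem br_circ_of_isAssoc (ha : IsAssoc m) (u v w : V) :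
    br m u (circ m v w) = circ m (br m u v) w + circ m v (br m u w) := by
  simp only [br, circ, map_add, map_sub, map_smul, LinearMap.add_apply, LinearMap.sub_apply,
    LinearMap.smul_apply]
  linear_combination (norm := module) (2 : K)⁻¹ • (-ha v w u - ha w v u - ha u v w + ha v u w
    - ha u w v + ha w u v)

namespace LRAlg

theorem circ_assoc_of_isAssoc (h : LRAlg m) (ha : IsAssoc m) (u v w : V) :
    circ m (circ m u v) w = circ m u (circ m v w) := by
  obtain ⟨hL, hR⟩ := h
  simp only [circ, map_add, map_smul, LinearMap.add_apply, LinearMap.smul_apply]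
  linear_combination (norm := module) ((2 : K)⁻¹ * (2 : K)⁻¹) • (ha v u w - hL u v w - ha w u v
    + hR u v w + ha u w v - hR w v u - ha v w u - hL v w u)

theorem poissonAdmissible_of_isAssoc [CharZero K] (h : LRAlg m) (ha : IsAssoc m) :
    PoissonAdmissible m :=
  ⟨br_jacobi_of_isAssoc ha, h.circ_assoc_of_isAssoc ha, br_circ_of_isAssoc ha⟩

theorem mul_mul_eq_mul_mul_swap_of_br_circ [CharZero K] (h : LRAlg m)
    (hd : ∀ u v w : V, br m u (circ m v w) = circ m (br m u v) w + circ m v (br m u w))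
    (a b c : V) : m (m a b) c = m c (m b a) := by
  obtain ⟨hL, hR⟩ := h
  have H := hd a b c
  simp only [br, circ, map_add, map_sub, map_smul, LinearMap.add_apply, LinearMap.sub_apply,
    LinearMap.smul_apply] at H
  linear_combination (norm := module) -H + (2 : K)⁻¹ • (hL a b c + hL a c b + hL b c a
    - hR c a b + hR a b c - hR c b a)

theorem isAssoc_of_poissonAdmissible [CharZero K] (h : LRAlg m) (hp : PoissonAdmissible m) :
    IsAssoc m := by
  obtain ⟨-, hca, hd⟩ := hp
  have hswap := h.mul_mul_eq_mul_mul_swap_of_br_circ hd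
  intro u v w
  have H := hca u v w
  simp only [circ, map_add, map_smul, LinearMap.add_apply, LinearMap.smul_apply] at H
  linear_combination (norm := module) (2 : K) • H + (2 : K)⁻¹ • (hswap v u w + hswap u v w
    - hswap v w u + hswap w v u) - h.2 u w v

end LRAlg

end

/-- an LR-algebra is Poisson admissible iff it is associative. -/
theorem stmt11 {K V : Type*} [Field K] [CharZero K] [AddCommGroup V] [Module K V]
    (m : V →ₗ[K] V →ₗ[K] V) (h : LRAlg m) :
    PoissonAdmissible m ↔ IsAssoc m :=
  ⟨h.isAssoc_of_poissonAdmissible, h.poissonAdmissible_of_isAssoc⟩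
end

section
/- Let g be a semisimple Lie algebra over a field of characteristic 0. Then the only Poisson structure on g is the trivial one: if ∘ is a commutative associative product on g such that every ad_u is a derivation of ∘, then u∘v = 0 for all u,v. -/
/-- A product `α` on a Lie algebra is Lie-admissible if `α(u,v) - α(v,u) = ⁅u,v⁆`. -/
def LieAdmissible {K L : Type*} [Field K] [LieRing L] [LieAlgebra K L]
    (α : L →ₗ[K] L →ₗ[K] L) : Prop :=
  ∀ u v : L, α u v - α v u = ⁅u, v⁆

/-- A product `α` on a Lie algebra is bi-invariant if every `ad_u` is a derivation of it. -/
def BiInvariant {K L : Type*} [Field K] [LieRing L] [LieAlgebra K L]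
    (α : L →ₗ[K] L →ₗ[K] L) : Prop :=
  ∀ u v w : L, ⁅u, α v w⁆ = α ⁅u, v⁆ w + α v ⁅u, w⁆

/-- A quasi-canonical product: Lie-admissible, bi-invariant, with curvature
`K^α(u,v) = [L_u, L_v] - L_{[u,v]}` equal to `-(1/4) ad_{[u,v]}`. -/
def QuasiCanonical {K L : Type*} [Field K] [LieRing L] [LieAlgebra K L]
    (α : L →ₗ[K] L →ₗ[K] L) : Prop :=
  LieAdmissible α ∧ BiInvariant α ∧
    ∀ u v w : L, α u (α v w) - α v (α u w) - α ⁅u, v⁆ w = -((4 : K)⁻¹ • ⁅⁅u, v⁆, w⁆)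

/-!
Write `L_a = c a`. Bi-invariance says `L_⁅x, a⁆ = ⁅ad x, L_a⁆`, so every `L_a` is traceless, `g`
being perfect; by associativity every power of `L_a` is again some `L_w`, so over a field of
characteristic zero `L_a` is nilpotent. The `L_a` commute, hence by Engel's theorem `g` is a
nilpotent module over the abelian Lie algebra they form, and a nonzero `g ∘ g` would contain a
nonzero vector killed by every `L_a`. But the annihilator of `∘` is an ideal centralising `g ∘ g`,
so its intersection with `g ∘ g` is an abelian ideal of `g`, hence zero.
-/

open Module
open scoped TensorProduct

namespace Module.End

variable {K V : Type*} [Field K] [CharZero K] [AddCommGroup V] [Module K V]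
  [FiniteDimensional K V]

theorem not_injective_of_trace_pow_eq_zero [Nontrivial V] {f : End K V}
    (hf : ∀ k : ℕ, LinearMap.trace K V (f ^ (k + 1)) = 0) : ¬ Function.Injective f := by
  -- Cayley–Hamilton: `0 = tr (χ_f(f)) = χ_f(0) · dim V`
  have htr := congrArg (LinearMap.trace K V) (LinearMap.aeval_self_charpoly f)
  rw [Polynomial.aeval_eq_sum_range, map_sum, Finset.sum_range_succ', map_zero] at htr
  simp only [map_smul, hf, smul_eq_mul, mul_zero, Finset.sum_const_zero, zero_add, pow_zero,
    LinearMap.trace_one, mul_eq_zero, Nat.cast_eq_zero] at htr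
  replace htr := htr.resolve_right (Module.finrank_pos (R := K) (M := V)).ne'
  obtain ⟨m, hm, hfm⟩ := (LinearMap.charpoly_constantCoeff_eq_zero_iff f).mp
    (by rwa [Polynomial.constantCoeff_apply])
  exact fun hinj => hm (hinj (hfm.trans (map_zero f).symm))

theorem isNilpotent_of_trace_pow_eq_zero {f : End K V}
    (hf : ∀ k : ℕ, LinearMap.trace K V (f ^ (k + 1)) = 0) : IsNilpotent f := by
  obtain ⟨d, hd⟩ : ∃ d, finrank K V = d := ⟨_, rfl⟩
  induction d using Nat.strong_induction_on generalizing V with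
  | h d ih =>
  rcases subsingleton_or_nontrivial V with _ | _
  · exact isNilpotent_of_subsingleton
  -- `f` is not injective, so its range has smaller dimension and `f` restricted to it
  -- has the same power traces
  have hmaps : ∀ x ∈ LinearMap.range f, f x ∈ LinearMap.range f := fun x _ => ⟨x, rfl⟩
  have hlt : finrank K (LinearMap.range f) < d := by
    rw [← hd]
    refine Submodule.finrank_lt fun htop => ?_
    exact not_injective_of_trace_pow_eq_zero hf
      (LinearMap.injective_iff_surjective.mpr (LinearMap.range_eq_top.mp htop))
  have hg : ∀ k : ℕ, LinearMap.trace K _ (f.restrict hmaps ^ (k + 1)) = 0 := fun k => by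
    rw [pow_restrict, LinearMap.trace_restrict_eq_of_forall_mem _ _ fun x => by
      rw [pow_succ', mul_apply]; exact LinearMap.mem_range_self f _]
    exact hf k
  obtain ⟨m, hm⟩ := ih _ hlt hg rfl
  rw [pow_restrict] at hm
  refine ⟨m + 1, LinearMap.ext fun x => ?_⟩
  simpa [pow_succ] using congrArg Subtype.val (LinearMap.congr_fun hm ⟨f x, x, rfl⟩)

end Module.End

theorem LieIdeal.top_lie_top_eq_top_of_isSemisimple {R L : Type*} [CommRing R] [LieRing L]
    [LieAlgebra R L] [LieAlgebra.IsSemisimple R L] :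
    ⁅(⊤ : LieIdeal R L), (⊤ : LieIdeal R L)⁆ = ⊤ := by
  set I : LieIdeal R L := ⁅(⊤ : LieIdeal R L), ⊤⁆
  -- the complement of `I` is an abelian ideal, as `⁅Iᶜ, Iᶜ⁆ ≤ I ⊓ Iᶜ = ⊥`
  have hcompl : IsLieAbelian (Iᶜ : LieIdeal R L) := by
    rw [LieSubmodule.lie_abelian_iff_lie_self_eq_bot, ← le_bot_iff, ← inf_compl_eq_bot (a := I)]
    exact le_inf (LieSubmodule.mono_lie le_top le_top) (LieSubmodule.lie_le_right _ _)
  rw [← compl_eq_bot]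
  exact (LieAlgebra.hasTrivialRadical_iff_no_abelian_ideals R L).mp inferInstance _ hcompl

namespace BiInvariant

variable {K L : Type*} [Field K] [LieRing L] [LieAlgebra K L] {c : L →ₗ[K] L →ₗ[K] L}

def toLieModuleHom (hc : BiInvariant c) : L →ₗ⁅K,L⁆ L →ₗ[K] L :=
  { c with
    map_lie' := fun {x a} => LinearMap.ext fun w => by
      simp [hc x a w] }

theorem trace_eq_zero [LieAlgebra.IsSemisimple K L] (hc : BiInvariant c) (a : L) :
    LinearMap.trace K L (c a) = 0 := by
  have ha : a ∈ (⁅(⊤ : LieIdeal K L), ⊤⁆ : LieIdeal K L).toSubmodule := by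
    simp [LieIdeal.top_lie_top_eq_top_of_isSemisimple]
  rw [LieSubmodule.lieIdeal_oper_eq_linear_span'] at ha
  refine Submodule.span_le (p := LinearMap.ker (LinearMap.trace K L ∘ₗ c)) |>.mpr ?_ ha
  rintro _ ⟨x, -, y, -, rfl⟩
  have hlie : c ⁅x, y⁆ = ⁅LieAlgebra.ad K L x, c y⁆ := by
    ext w
    simp [hc x y w, Ring.lie_def]
  simp [hlie]

theorem isNilpotent_apply [CharZero K] [FiniteDimensional K L] [LieAlgebra.IsSemisimple K L]
    (hc : BiInvariant c) (hassoc : ∀ u v w : L, c (c u v) w = c u (c v w)) (a : L) :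
    IsNilpotent (c a) := by
  refine Module.End.isNilpotent_of_trace_pow_eq_zero fun k => ?_
  obtain ⟨w, hw⟩ : ∃ w, c a ^ (k + 1) = c w := by
    induction k with
    | zero => exact ⟨a, pow_one _⟩
    | succ k ih =>
      obtain ⟨w, hw⟩ := ih
      exact ⟨c a w, LinearMap.ext fun v => by rw [pow_succ', Module.End.mul_apply, hw, hassoc]⟩
  rw [hw, hc.trace_eq_zero]

def productIdeal (hc : BiInvariant c) : LieIdeal K L :=
  (TensorProduct.LieModule.liftLie K L L L L hc.toLieModuleHom).range

theorem apply_mem_productIdeal (hc : BiInvariant c) (a b : L) : c a b ∈ hc.productIdeal :=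
  ⟨a ⊗ₜ b, TensorProduct.LieModule.liftLie_apply _ _ _ _ _ _ _ _⟩

theorem mem_ker_toLieModuleHom (hc : BiInvariant c) {z : L} :
    z ∈ hc.toLieModuleHom.ker ↔ c z = 0 :=
  LieModuleHom.mem_ker

theorem lie_eq_zero_of_mem_ker_of_mem_productIdeal (hc : BiInvariant c)
    (hcomm : ∀ u v : L, c u v = c v u) {y x : L} (hy : y ∈ hc.toLieModuleHom.ker)
    (hx : x ∈ hc.productIdeal) : ⁅y, x⁆ = 0 := by
  obtain ⟨t, rfl⟩ := hx
  suffices LieAlgebra.ad K L y ∘ₗ (TensorProduct.LieModule.liftLie K L L L L hc.toLieModuleHom :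
      L ⊗[K] L →ₗ[K] L) = 0 from LinearMap.congr_fun this t
  refine TensorProduct.ext' fun a b => ?_
  have hker : ∀ z, c ⁅y, z⁆ = 0 := fun z => by
    rw [← lie_skew, map_neg, hc.mem_ker_toLieModuleHom.mp (LieSubmodule.lie_mem _ hy), neg_zero]
  change ⁅y, c a b⁆ = 0
  rw [hc y a b, hcomm a, hker, hker, LinearMap.zero_apply, LinearMap.zero_apply, add_zero]

theorem disjoint_ker_productIdeal [LieAlgebra.HasTrivialRadical K L] (hc : BiInvariant c)
    (hcomm : ∀ u v : L, c u v = c v u) : Disjoint hc.toLieModuleHom.ker hc.productIdeal := by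
  rw [disjoint_iff]
  refine (LieAlgebra.hasTrivialRadical_iff_no_abelian_ideals K L).mp inferInstance _ ?_
  rw [LieSubmodule.lie_abelian_iff_lie_self_eq_bot, LieSubmodule.lie_eq_bot_iff]
  exact fun y hy x hx => hc.lie_eq_zero_of_mem_ker_of_mem_productIdeal hcomm hy.1 hx.2

end BiInvariant

section

attribute [local instance] LieRing.ofAssociativeRing LieAlgebra.ofAssociativeAlgebra

variable {K L : Type*} [Field K] [LieRing L] [LieAlgebra K L] (c : L →ₗ[K] L →ₗ[K] L)

def mulOperators (hcomm : ∀ u v : L, c u v = c v u)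
    (hassoc : ∀ u v w : L, c (c u v) w = c u (c v w)) :
    LieSubalgebra K (Module.End K L) :=
  { LinearMap.range c with
    lie_mem' := by
      rintro _ _ ⟨a, rfl⟩ ⟨b, rfl⟩
      suffices ⁅c a, c b⁆ = 0 from this ▸ (LinearMap.range c).zero_mem
      ext w
      rw [Ring.lie_def, LinearMap.sub_apply, Module.End.mul_apply, Module.End.mul_apply,
        LinearMap.zero_apply, ← hassoc, hcomm a b, hassoc, sub_self] }

variable {c}

theorem lowerCentralSeries_one_mulOperators_le (hc : BiInvariant c)
    (hcomm : ∀ u v : L, c u v = c v u) (hassoc : ∀ u v w : L, c (c u v) w = c u (c v w)) :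
    (LieModule.lowerCentralSeries K (mulOperators c hcomm hassoc) L 1 : Submodule K L) ≤
      hc.productIdeal.toSubmodule := by
  rw [LieModule.lowerCentralSeries_succ, LieModule.lowerCentralSeries_zero,
    LieSubmodule.lieIdeal_oper_eq_linear_span', Submodule.span_le]
  rintro _ ⟨⟨_, a, rfl⟩, -, b, -, rfl⟩
  exact hc.apply_mem_productIdeal a b

theorem maxTrivSubmodule_mulOperators_le (hc : BiInvariant c)
    (hcomm : ∀ u v : L, c u v = c v u) (hassoc : ∀ u v w : L, c (c u v) w = c u (c v w)) :
    (LieModule.maxTrivSubmodule K (mulOperators c hcomm hassoc) L : Submodule K L) ≤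
      hc.toLieModuleHom.ker.toSubmodule := by
  intro z hz
  rw [LieSubmodule.mem_toSubmodule, hc.mem_ker_toLieModuleHom]
  ext a
  rw [hcomm]
  exact (LieModule.mem_maxTrivSubmodule K _ L z).mp hz ⟨c a, a, rfl⟩

end

/-- a finite-dimensional semisimple Lie algebra over a field of
characteristic zero admits only the trivial Poisson structure. -/
theorem stmt15 {K L : Type*} [Field K] [CharZero K] [LieRing L] [LieAlgebra K L]
    [FiniteDimensional K L] [LieAlgebra.IsSemisimple K L]
    (c : L →ₗ[K] L →ₗ[K] L)
    (hcomm : ∀ u v : L, c u v = c v u)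
    (hassoc : ∀ u v w : L, c (c u v) w = c u (c v w))
    (hder : ∀ u v w : L, ⁅u, c v w⁆ = c ⁅u, v⁆ w + c v ⁅u, w⁆) :
    ∀ u v : L, c u v = 0 := by
  have hc : BiInvariant c := hder
  have hnil : LieModule.IsNilpotent (mulOperators c hcomm hassoc) L := by
    rw [LieModule.isNilpotent_iff_forall' (R := K)]
    rintro ⟨_, a, rfl⟩
    exact hc.isNilpotent_apply hassoc a
  have hdisj : Disjoint (LieModule.lowerCentralSeries K (mulOperators c hcomm hassoc) L 1)
      (LieModule.maxTrivSubmodule K (mulOperators c hcomm hassoc) L) := by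
    rw [← LieSubmodule.disjoint_toSubmodule]
    exact ((LieSubmodule.disjoint_toSubmodule.mpr (hc.disjoint_ker_productIdeal hcomm)).symm.mono
      (lowerCentralSeries_one_mulOperators_le hc hcomm hassoc)
      (maxTrivSubmodule_mulOperators_le hc hcomm hassoc))
  have htriv := (LieModule.disjoint_lowerCentralSeries_maxTrivSubmodule_iff K _ L).mp hdisj
  exact fun u v => htriv.trivial ⟨c u, u, rfl⟩ v
end

section
/- Let (g, ω) be a symplectic Lie algebra and define α^a(u,v) = -ad*_u v, where ad*_u is the adjoint of ad_u with respect to ω. Then α^a is quasi-canonical if and only if g is 2-nilpotent and [ad_u, ad*_v] = 0 for all u,v in g. -/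
/-- The product `α^a(u,v) = -ad*_u v` associated to the data `ad* : L → End L`. -/
def aProd {K L : Type*} [Field K] [LieRing L] [LieAlgebra K L]
    (adStar : L → L →ₗ[K] L) (u v : L) : L :=
  -(adStar u v)

section SymplecticAdjoint

variable {K L : Type*} [Field K] [LieRing L] [LieAlgebra K L]
  {ω : L →ₗ[K] L →ₗ[K] K} {adStar : L → L →ₗ[K] L}

theorem eq_of_forall_form_eq (hnd : ∀ u : L, (∀ v : L, ω u v = 0) → u = 0) {a b : L}
    (h : ∀ x : L, ω a x = ω b x) : a = b :=
  sub_eq_zero.mp <| hnd _ fun x => by rw [map_sub, LinearMap.sub_apply, h x, sub_self]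

theorem adStar_eq_zero_of_forall_lie_eq_zero (hnd : ∀ u : L, (∀ v : L, ω u v = 0) → u = 0)
    (hadj : ∀ u v w : L, ω (adStar u v) w = ω v ⁅u, w⁆) {z : L} (hz : ∀ w : L, ⁅z, w⁆ = 0)
    (v : L) : adStar z v = 0 :=
  hnd _ fun x => by rw [hadj, hz, map_zero]

theorem adStar_commutator (hnd : ∀ u : L, (∀ v : L, ω u v = 0) → u = 0)
    (hadj : ∀ u v w : L, ω (adStar u v) w = ω v ⁅u, w⁆) (u v w : L) :
    adStar u (adStar v w) - adStar v (adStar u w) = -adStar ⁅u, v⁆ w := by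
  refine eq_of_forall_form_eq hnd fun x => ?_
  simp only [map_sub, LinearMap.sub_apply, map_neg, LinearMap.neg_apply, hadj]
  rw [← map_sub, ← map_neg, lie_lie]
  congr 1
  abel

theorem aProd_sub_aProd_swap (hskew : ∀ u v : L, ω u v = -ω v u)
    (hnd : ∀ u : L, (∀ v : L, ω u v = 0) → u = 0)
    (hcocycle : ∀ u v w : L, ω ⁅u, v⁆ w + ω ⁅v, w⁆ u + ω ⁅w, u⁆ v = 0)
    (hadj : ∀ u v w : L, ω (adStar u v) w = ω v ⁅u, w⁆) (u v : L) :
    aProd adStar u v - aProd adStar v u = ⁅u, v⁆ := by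
  refine eq_of_forall_form_eq hnd fun x => ?_
  simp only [aProd, map_sub, LinearMap.sub_apply, map_neg, LinearMap.neg_apply, hadj]
  have hvx : ω ⁅v, x⁆ u = -ω u ⁅v, x⁆ := hskew _ _
  have hxu : ω ⁅x, u⁆ v = ω v ⁅u, x⁆ := by rw [hskew, ← lie_skew u x, map_neg]
  have hc := hcocycle u v x
  rw [hvx, hxu] at hc
  linear_combination -hc

theorem aProd_curvature_eq_zero (hnd : ∀ u : L, (∀ v : L, ω u v = 0) → u = 0)
    (hadj : ∀ u v w : L, ω (adStar u v) w = ω v ⁅u, w⁆) (u v w : L) :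
    aProd adStar u (aProd adStar v w) - aProd adStar v (aProd adStar u w)
      - aProd adStar ⁅u, v⁆ w = 0 := by
  simp only [aProd, map_neg, neg_neg, adStar_commutator hnd hadj, sub_neg_eq_add,
    neg_add_cancel]

theorem aProd_curvature_iff_lie_lie_eq_zero (h4 : (4 : K) ≠ 0)
    (hnd : ∀ u : L, (∀ v : L, ω u v = 0) → u = 0)
    (hadj : ∀ u v w : L, ω (adStar u v) w = ω v ⁅u, w⁆) :
    (∀ u v w : L, aProd adStar u (aProd adStar v w) - aProd adStar v (aProd adStar u w)
        - aProd adStar ⁅u, v⁆ w = -((4 : K)⁻¹ • ⁅⁅u, v⁆, w⁆)) ↔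
      ∀ u v w : L, ⁅⁅u, v⁆, w⁆ = 0 := by
  simp only [aProd_curvature_eq_zero hnd hadj, eq_comm (a := (0 : L)), neg_eq_zero,
    smul_eq_zero, inv_eq_zero, h4, false_or]

theorem lie_aProd_iff_lie_adStar (hcentral : ∀ u v w : L, adStar ⁅u, v⁆ w = 0) :
    (∀ u v w : L,
        ⁅u, aProd adStar v w⁆ = aProd adStar ⁅u, v⁆ w + aProd adStar v ⁅u, w⁆) ↔
      ∀ u v w : L, ⁅u, adStar v w⁆ = adStar v ⁅u, w⁆ := by
  simp only [aProd, lie_neg, hcentral, neg_zero, zero_add, neg_inj]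

end SymplecticAdjoint

theorem stmt17_general {K L : Type*} [Field K] [CharZero K] [LieRing L] [LieAlgebra K L]
    (ω : L →ₗ[K] L →ₗ[K] K)
    (hskew : ∀ u v : L, ω u v = -ω v u)
    (hnd : ∀ u : L, (∀ v : L, ω u v = 0) → u = 0)
    (hcocycle : ∀ u v w : L, ω ⁅u, v⁆ w + ω ⁅v, w⁆ u + ω ⁅w, u⁆ v = 0)
    (adStar : L → L →ₗ[K] L)
    (hadj : ∀ u v w : L, ω (adStar u v) w = ω v ⁅u, w⁆) :
    (((∀ u v : L, aProd adStar u v - aProd adStar v u = ⁅u, v⁆) ∧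
      (∀ u v w : L,
        ⁅u, aProd adStar v w⁆ = aProd adStar ⁅u, v⁆ w + aProd adStar v ⁅u, w⁆) ∧
      (∀ u v w : L,
        aProd adStar u (aProd adStar v w) - aProd adStar v (aProd adStar u w)
          - aProd adStar ⁅u, v⁆ w = -((4 : K)⁻¹ • ⁅⁅u, v⁆, w⁆))) ↔
      ((∀ u v w : L, ⁅⁅u, v⁆, w⁆ = 0) ∧
        (∀ u v w : L, ⁅u, adStar v w⁆ = adStar v ⁅u, w⁆))) := by
  have hcurv := aProd_curvature_iff_lie_lie_eq_zero (by norm_num) hnd hadj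
  have hcentral (hnil : ∀ u v w : L, ⁅⁅u, v⁆, w⁆ = 0) (u v w : L) : adStar ⁅u, v⁆ w = 0 :=
    adStar_eq_zero_of_forall_lie_eq_zero hnd hadj (hnil u v) w
  constructor
  · rintro ⟨-, hbiinv, hcurvature⟩
    have hnil := hcurv.mp hcurvature
    exact ⟨hnil, (lie_aProd_iff_lie_adStar (hcentral hnil)).mp hbiinv⟩
  · rintro ⟨hnil, hcomm⟩
    exact ⟨aProd_sub_aProd_swap hskew hnd hcocycle hadj,
      (lie_aProd_iff_lie_adStar (hcentral hnil)).mpr hcomm, hcurv.mpr hnil⟩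

/-- on a symplectic Lie algebra `(g, ω)`, the product
`α^a(u,v) = -ad*_u v` is quasi-canonical iff `g` is 2-nilpotent and
`[ad_u, ad*_v] = 0` for all `u, v`. -/
theorem stmt17 {K L : Type*} [Field K] [CharZero K] [LieRing L] [LieAlgebra K L]
    [FiniteDimensional K L]
    (ω : L →ₗ[K] L →ₗ[K] K)
    (hskew : ∀ u v : L, ω u v = -ω v u)
    (hnd : ∀ u : L, (∀ v : L, ω u v = 0) → u = 0)
    (hcocycle : ∀ u v w : L, ω ⁅u, v⁆ w + ω ⁅v, w⁆ u + ω ⁅w, u⁆ v = 0)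
    (adStar : L → L →ₗ[K] L)
    (hadj : ∀ u v w : L, ω (adStar u v) w = ω v ⁅u, w⁆) :
    (((∀ u v : L, aProd adStar u v - aProd adStar v u = ⁅u, v⁆) ∧
      (∀ u v w : L,
        ⁅u, aProd adStar v w⁆ = aProd adStar ⁅u, v⁆ w + aProd adStar v ⁅u, w⁆) ∧
      (∀ u v w : L,
        aProd adStar u (aProd adStar v w) - aProd adStar v (aProd adStar u w)
          - aProd adStar ⁅u, v⁆ w = -((4 : K)⁻¹ • ⁅⁅u, v⁆, w⁆))) ↔
      ((∀ u v w : L, ⁅⁅u, v⁆, w⁆ = 0) ∧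
        (∀ u v w : L, ⁅u, adStar v w⁆ = adStar v ⁅u, w⁆))) :=
  stmt17_general ω hskew hnd hcocycle adStar hadj
end

section
/- Let (g, ω) be a 2-nilpotent symplectic Lie algebra that carries a bi-invariant nondegenerate symmetric bilinear form B (i.e., B([u,v],w) = -B(v,[u,w])). Then [ad_u, ad*_v] = 0 for all u,v in g, where ad*_v is the adjoint of ad_v with respect to ω; hence (g, ω) is a symplectic Poisson algebra. -/
open LinearMap (BilinForm)

namespace LieAlgebra

section CommRing

variable {R L : Type*} [CommRing R] [LieRing L] [LieAlgebra R L]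

theorem mem_orthogonal_derivedSeries_one_iff (φ : BilinForm R L) (z : L) :
    z ∈ φ.orthogonal (derivedSeries R L 1).toSubmodule ↔
      ∀ x y : L, φ ⁅x, y⁆ z = 0 := by
  rw [derivedSeries_def, derivedSeriesOfIdeal_succ, derivedSeriesOfIdeal_zero,
    LieSubmodule.lieIdeal_oper_eq_linear_span']
  refine ⟨fun h x y => h _ (Submodule.subset_span ⟨x, trivial, y, trivial, rfl⟩),
    fun h => ?_⟩
  change Submodule.span R _ ≤ LinearMap.ker (φ.flip z)
  rw [Submodule.span_le]
  rintro _ ⟨x, -, y, -, rfl⟩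
  exact h x y

theorem orthogonal_derivedSeries_one_eq_center {B : BilinForm R L} (hB : B.SeparatingRight)
    (hBinv : B.lieInvariant L) :
    B.orthogonal (derivedSeries R L 1).toSubmodule = (center R L).toSubmodule := by
  ext z
  rw [mem_orthogonal_derivedSeries_one_iff, LieSubmodule.mem_toSubmodule,
    LieModule.mem_maxTrivSubmodule]
  refine ⟨fun h u => hB _ fun x => ?_, fun h x y => ?_⟩
  · rw [← neg_eq_zero, ← hBinv, h]
  · rw [hBinv, h, map_zero, neg_zero]

theorem center_le_orthogonal_derivedSeries_one {ω : BilinForm R L}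
    (hω : ∀ u v w : L, ω ⁅u, v⁆ w + ω ⁅v, w⁆ u + ω ⁅w, u⁆ v = 0) :
    (center R L).toSubmodule ≤ ω.orthogonal (derivedSeries R L 1).toSubmodule := by
  intro z hz
  rw [LieSubmodule.mem_toSubmodule, LieModule.mem_maxTrivSubmodule] at hz
  rw [mem_orthogonal_derivedSeries_one_iff]
  intro x y
  simpa [hz, ← lie_skew z x] using hω x y z

theorem cocycle_lie_lie_eq_zero {ω : BilinForm R L}
    (hω : ∀ u v w : L, ω ⁅u, v⁆ w + ω ⁅v, w⁆ u + ω ⁅w, u⁆ v = 0)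
    (h2nil : ∀ u v w : L, ⁅⁅u, v⁆, w⁆ = 0) (x y a b : L) :
    ω ⁅x, y⁆ ⁅a, b⁆ = 0 := by
  simpa [← lie_skew y, h2nil] using hω x y ⁅a, b⁆

end CommRing

theorem orthogonal_derivedSeries_one_eq_center_of_cocycle {K L : Type*} [Field K] [LieRing L]
    [LieAlgebra K L] [FiniteDimensional K L] {ω B : BilinForm K L} (hω : ω.Nondegenerate)
    (hωcocycle : ∀ u v w : L, ω ⁅u, v⁆ w + ω ⁅v, w⁆ u + ω ⁅w, u⁆ v = 0)
    (hB : B.Nondegenerate) (hBinv : B.lieInvariant L) :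
    ω.orthogonal (derivedSeries K L 1).toSubmodule = (center K L).toSubmodule := by
  refine (Submodule.eq_of_le_of_finrank_le (center_le_orthogonal_derivedSeries_one hωcocycle)
    ?_).symm
  rw [← orthogonal_derivedSeries_one_eq_center hB.2 hBinv, BilinForm.finrank_orthogonal hω,
    BilinForm.finrank_orthogonal hB]

end LieAlgebra

theorem stmt18_general {K L : Type*} [Field K] [LieRing L] [LieAlgebra K L]
    [FiniteDimensional K L]
    (ω : L →ₗ[K] L →ₗ[K] K)
    (hskew : ∀ u v : L, ω u v = -ω v u)
    (hωnd : ∀ u : L, (∀ v : L, ω u v = 0) → u = 0)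
    (hcocycle : ∀ u v w : L, ω ⁅u, v⁆ w + ω ⁅v, w⁆ u + ω ⁅w, u⁆ v = 0)
    (h2nil : ∀ u v w : L, ⁅⁅u, v⁆, w⁆ = 0)
    (B : L →ₗ[K] L →ₗ[K] K)
    (hBsymm : ∀ u v : L, B u v = B v u)
    (hBnd : ∀ u : L, (∀ v : L, B u v = 0) → u = 0)
    (hBinv : ∀ u v w : L, B ⁅u, v⁆ w = -B v ⁅u, w⁆)
    (adStar : L → L →ₗ[K] L)
    (hadj : ∀ u v w : L, ω (adStar u v) w = ω v ⁅u, w⁆) :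
    ∀ u v w : L, ⁅u, adStar v w⁆ = adStar v ⁅u, w⁆ := by
  have hωrefl : ω.IsRefl := fun x y h => by rw [hskew, h, neg_zero]
  have hcenter := LieAlgebra.orthogonal_derivedSeries_one_eq_center_of_cocycle
    (hωrefl.nondegenerate_iff_separatingLeft.2 hωnd) hcocycle
    ((BilinForm.IsSymm.isRefl ⟨hBsymm⟩).nondegenerate_iff_separatingLeft.2 hBnd) hBinv
  intro u v w
  have hcentral : adStar v w ∈ LieAlgebra.center K L := by
    rw [← LieSubmodule.mem_toSubmodule, ← hcenter,
      LieAlgebra.mem_orthogonal_derivedSeries_one_iff]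
    intro x y
    rw [hskew, hadj, ← lie_skew, h2nil, neg_zero, map_zero, neg_zero]
  have hvanish : adStar v ⁅u, w⁆ = 0 := hωnd _ fun x => by
    rw [hadj]
    exact LieAlgebra.cocycle_lie_lie_eq_zero hcocycle h2nil u w v x
  rw [(LieModule.mem_maxTrivSubmodule _ _ _ _).1 hcentral u, hvanish]

/-- a 2-nilpotent symplectic Lie algebra carrying a bi-invariant
nondegenerate symmetric bilinear form satisfies `[ad_u, ad*_v] = 0`, i.e. it is a
symplectic Poisson algebra. -/
theorem stmt18 {K L : Type*} [Field K] [CharZero K] [LieRing L] [LieAlgebra K L]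
    [FiniteDimensional K L]
    (ω : L →ₗ[K] L →ₗ[K] K)
    (hskew : ∀ u v : L, ω u v = -ω v u)
    (hωnd : ∀ u : L, (∀ v : L, ω u v = 0) → u = 0)
    (hcocycle : ∀ u v w : L, ω ⁅u, v⁆ w + ω ⁅v, w⁆ u + ω ⁅w, u⁆ v = 0)
    (h2nil : ∀ u v w : L, ⁅⁅u, v⁆, w⁆ = 0)
    (B : L →ₗ[K] L →ₗ[K] K)
    (hBsymm : ∀ u v : L, B u v = B v u)
    (hBnd : ∀ u : L, (∀ v : L, B u v = 0) → u = 0)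
    (hBinv : ∀ u v w : L, B ⁅u, v⁆ w = -B v ⁅u, w⁆)
    (adStar : L → L →ₗ[K] L)
    (hadj : ∀ u v w : L, ω (adStar u v) w = ω v ⁅u, w⁆) :
    ∀ u v w : L, ⁅u, adStar v w⁆ = adStar v ⁅u, w⁆ :=
  stmt18_general ω hskew hωnd hcocycle h2nil B hBsymm hBnd hBinv adStar hadj
end

section
/- Let g be a real Lie algebra with a positive definite inner product ⟨,⟩ whose Levi-Civita product (defined by 2⟨u.v, w⟩ = ⟨[u,v],w⟩ + ⟨[w,v],u⟩ + ⟨[w,u],v⟩) is quasi-canonical. Then ⟨,⟩ is bi-invariant (each ad_u is skew-symmetric) and the Levi-Civita product equals u.v = (1/2)[u,v]. -/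
open LinearMap (IsSkewAdjoint)
open LinearMap.BilinForm (orthogonal)

section PositiveDefinite

variable {V : Type*} [AddCommGroup V] [Module ℝ V] {B : V →ₗ[ℝ] V →ₗ[ℝ] ℝ}

theorem eq_zero_of_apply_self_eq_zero (hpos : ∀ u : V, u ≠ 0 → 0 < B u u) {t : V}
    (h : B t t = 0) : t = 0 := by
  by_contra ht
  exact (hpos t ht).ne' h

theorem eq_of_forall_apply_eq (hpos : ∀ u : V, u ≠ 0 → 0 < B u u) {s t : V}
    (h : ∀ w, B s w = B t w) : s = t := by
  rw [← sub_eq_zero]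
  apply eq_zero_of_apply_self_eq_zero hpos
  simp only [map_sub, LinearMap.sub_apply, h, sub_self]

theorem isCompl_orthogonal_of_pos [FiniteDimensional ℝ V] (hsymm : ∀ u v : V, B u v = B v u)
    (hpos : ∀ u : V, u ≠ 0 → 0 < B u u) (W : Submodule ℝ V) : IsCompl W (orthogonal B W) :=
  (LinearMap.BilinForm.isCompl_orthogonal_iff_disjoint fun u v h ↦ hsymm u v ▸ h).2 <|
    Submodule.disjoint_def.2 fun x hx hx' ↦ eq_zero_of_apply_self_eq_zero hpos (hx' x hx)

end PositiveDefinite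

section LeviCivita

variable {L : Type*} [LieRing L] [LieAlgebra ℝ L] {B : L →ₗ[ℝ] L →ₗ[ℝ] ℝ}
  {p : L →ₗ[ℝ] L →ₗ[ℝ] L}

variable (B p) in
def IsLeviCivitaProduct : Prop :=
  ∀ u v w : L, 2 * B (p u v) w = B ⁅u, v⁆ w + B ⁅w, v⁆ u + B ⁅w, u⁆ v

variable (p) in
def HasCurvatureNegQuarterAd : Prop :=
  ∀ u v w : L, p u (p v w) - p v (p u w) - p ⁅u, v⁆ w = -((4 : ℝ)⁻¹ • ⁅⁅u, v⁆, w⁆)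

def bracketSpan (L : Type*) [LieRing L] [LieAlgebra ℝ L] : Submodule ℝ L :=
  Submodule.span ℝ {z | ∃ x y : L, ⁅x, y⁆ = z}

theorem lie_mem_bracketSpan (x y : L) : ⁅x, y⁆ ∈ bracketSpan L :=
  Submodule.subset_span ⟨x, y, rfl⟩

theorem IsLeviCivitaProduct.isSkewAdjoint (hkoszul : IsLeviCivitaProduct B p)
    (hsymm : ∀ u v : L, B u v = B v u) (u : L) : IsSkewAdjoint B (p u) := by
  intro v w
  have h₁ := hkoszul u v w
  have h₂ := hkoszul u w v
  rw [← lie_skew u w, ← lie_skew v w, ← lie_skew v u] at h₂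
  simp only [Pi.neg_apply, map_neg, LinearMap.neg_apply] at h₁ h₂ ⊢
  rw [hsymm v]
  linarith

theorem IsLeviCivitaProduct.eq_half_lie (hkoszul : IsLeviCivitaProduct B p)
    (hpos : ∀ u : L, u ≠ 0 → 0 < B u u)
    {u v : L} (h : ∀ w : L, B ⁅w, v⁆ u + B ⁅w, u⁆ v = 0) : p u v = (2 : ℝ)⁻¹ • ⁅u, v⁆ := by
  refine eq_of_forall_apply_eq hpos fun w ↦ ?_
  have := hkoszul u v w
  rw [map_smul, LinearMap.smul_apply, smul_eq_mul]
  linarith [h w]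

theorem isSkewAdjoint_ad_lie (hskew : ∀ u : L, IsSkewAdjoint B (p u))
    (hcurv : HasCurvatureNegQuarterAd p)
    (u v : L) : IsSkewAdjoint B (LieAlgebra.ad ℝ L ⁅u, v⁆) := by
  intro w x
  have h₁ := congrArg (B · x) (hcurv u v w)
  have h₂ := congrArg (B w) (hcurv u v x)
  simp only [map_sub, map_neg, map_smul, LinearMap.sub_apply, LinearMap.neg_apply,
    LinearMap.smul_apply, smul_eq_mul] at h₁ h₂
  simp only [IsSkewAdjoint, LinearMap.IsAdjointPair, Pi.neg_apply, map_neg] at hskew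
  simp only [LieAlgebra.ad_apply, Pi.neg_apply, map_neg]
  rw [hskew, hskew, hskew, hskew, hskew] at h₁
  linarith

theorem bracketSpan_le_comap_ad_skewAdjointSubmodule (hsymm : ∀ u v : L, B u v = B v u)
    (hkoszul : IsLeviCivitaProduct B p)
    (hcurv : HasCurvatureNegQuarterAd p) :
    bracketSpan L ≤
      B.skewAdjointSubmodule.comap (LieAlgebra.ad ℝ L : L →ₗ[ℝ] Module.End ℝ L) := by
  rw [bracketSpan, Submodule.span_le]
  rintro _ ⟨u, v, rfl⟩
  exact (LinearMap.mem_skewAdjointSubmodule _).2 <|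
    isSkewAdjoint_ad_lie (hkoszul.isSkewAdjoint hsymm) hcurv u v

theorem lie_eq_zero_of_isSkewAdjoint_ad_of_mem_orthogonal (hsymm : ∀ u v : L, B u v = B v u)
    (hpos : ∀ u : L, u ≠ 0 → 0 < B u u) {x a : L} (hx : IsSkewAdjoint B (LieAlgebra.ad ℝ L x))
    (ha : a ∈ orthogonal B (bracketSpan L)) : ⁅x, a⁆ = 0 := by
  refine eq_zero_of_apply_self_eq_zero hpos ?_
  have := hx a ⁅x, a⁆
  simp only [LieAlgebra.ad_apply, Pi.neg_apply, map_neg] at this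
  rw [this, hsymm, ha _ (lie_mem_bracketSpan _ _), neg_zero]

theorem lie_eq_zero_of_mem_orthogonal_bracketSpan (hsymm : ∀ u v : L, B u v = B v u)
    (hpos : ∀ u : L, u ≠ 0 → 0 < B u u) (hkoszul : IsLeviCivitaProduct B p)
    (hcurv : HasCurvatureNegQuarterAd p)
    {a b : L} (ha : a ∈ orthogonal B (bracketSpan L)) (hb : b ∈ orthogonal B (bracketSpan L)) :
    ⁅a, b⁆ = 0 := by
  have hperp {c : L} (hc : c ∈ orthogonal B (bracketSpan L)) (x y : L) : B ⁅x, y⁆ c = 0 :=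
    hc _ (lie_mem_bracketSpan x y)
  have hp {c d : L} (hc : c ∈ orthogonal B (bracketSpan L))
      (hd : d ∈ orthogonal B (bracketSpan L)) : p c d = (2 : ℝ)⁻¹ • ⁅c, d⁆ :=
    hkoszul.eq_half_lie hpos fun w ↦ by rw [hperp hc, hperp hd, add_zero]
  -- pair the curvature identity `K(a, b) a = -¼ ⁅⁅a, b⁆, a⁆` with `b`
  have hK := congrArg (B · b) (hcurv a b a)
  have h₁ : B (p a (p b a)) b = (4 : ℝ)⁻¹ * B ⁅a, b⁆ ⁅a, b⁆ := by
    rw [hkoszul.isSkewAdjoint hsymm, Pi.neg_apply, hp hb ha, hp ha hb, ← lie_skew b a]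
    simp only [map_smul, LinearMap.smul_apply, smul_eq_mul, map_neg, LinearMap.neg_apply]
    ring
  have h₂ : p a a = 0 := by rw [hp ha ha, lie_self, smul_zero]
  have h₃ : 2 * B (p ⁅a, b⁆ a) b = -B ⁅a, b⁆ ⁅a, b⁆ := by
    rw [hkoszul, hperp hb, hsymm ⁅b, _⁆, hperp ha, ← lie_skew b a, map_neg]
    ring
  simp only [map_sub, map_neg, map_smul, LinearMap.sub_apply, LinearMap.neg_apply,
    LinearMap.smul_apply, smul_eq_mul, h₁, h₂, map_zero, LinearMap.zero_apply, hperp hb] at hK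
  exact eq_zero_of_apply_self_eq_zero hpos (by linarith)

theorem ad_eq_zero_of_mem_orthogonal_bracketSpan [FiniteDimensional ℝ L]
    (hsymm : ∀ u v : L, B u v = B v u) (hpos : ∀ u : L, u ≠ 0 → 0 < B u u)
    (hkoszul : IsLeviCivitaProduct B p)
    (hcurv : HasCurvatureNegQuarterAd p)
    {a : L} (ha : a ∈ orthogonal B (bracketSpan L)) : LieAlgebra.ad ℝ L a = 0 := by
  suffices bracketSpan L ⊔ orthogonal B (bracketSpan L) ≤ LinearMap.ker (LieAlgebra.ad ℝ L a) by
    rwa [(isCompl_orthogonal_of_pos hsymm hpos _).sup_eq_top, top_le_iff,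
      LinearMap.ker_eq_top] at this
  refine sup_le (fun x hx ↦ ?_) fun b hb ↦
    lie_eq_zero_of_mem_orthogonal_bracketSpan hsymm hpos hkoszul hcurv ha hb
  have hx' := bracketSpan_le_comap_ad_skewAdjointSubmodule hsymm hkoszul hcurv hx
  rw [LinearMap.mem_ker, LieAlgebra.ad_apply, ← lie_skew,
    lie_eq_zero_of_isSkewAdjoint_ad_of_mem_orthogonal hsymm hpos
      ((LinearMap.mem_skewAdjointSubmodule _).1 hx') ha, neg_zero]

theorem isSkewAdjoint_ad [FiniteDimensional ℝ L]
    (hsymm : ∀ u v : L, B u v = B v u) (hpos : ∀ u : L, u ≠ 0 → 0 < B u u)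
    (hkoszul : IsLeviCivitaProduct B p)
    (hcurv : HasCurvatureNegQuarterAd p)
    (u : L) : IsSkewAdjoint B (LieAlgebra.ad ℝ L u) := by
  suffices ⊤ ≤ B.skewAdjointSubmodule.comap (LieAlgebra.ad ℝ L : L →ₗ[ℝ] Module.End ℝ L) from
    (LinearMap.mem_skewAdjointSubmodule _).1 (this Submodule.mem_top)
  rw [← (isCompl_orthogonal_of_pos hsymm hpos (bracketSpan L)).sup_eq_top]
  refine sup_le (bracketSpan_le_comap_ad_skewAdjointSubmodule hsymm hkoszul hcurv) fun a ha ↦ ?_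
  simp only [Submodule.mem_comap, LieHom.coe_toLinearMap,
    ad_eq_zero_of_mem_orthogonal_bracketSpan hsymm hpos hkoszul hcurv ha, zero_mem]

end LeviCivita

/-- on a real Lie algebra with a positive definite inner product whose
Levi-Civita product is quasi-canonical, the inner product is bi-invariant (each `ad_u`
is skew-symmetric) and the Levi-Civita product is `u·v = (1/2)⁅u,v⁆`. -/
theorem stmt19 {L : Type*} [LieRing L] [LieAlgebra ℝ L] [FiniteDimensional ℝ L]
    (B : L →ₗ[ℝ] L →ₗ[ℝ] ℝ)
    (hsymm : ∀ u v : L, B u v = B v u)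
    (hpos : ∀ u : L, u ≠ 0 → 0 < B u u)
    (p : L →ₗ[ℝ] L →ₗ[ℝ] L)
    (hkoszul : ∀ u v w : L,
      2 * B (p u v) w = B ⁅u, v⁆ w + B ⁅w, v⁆ u + B ⁅w, u⁆ v)
    (hqc : QuasiCanonical p) :
    (∀ u v w : L, B ⁅u, v⁆ w = -B v ⁅u, w⁆) ∧
      ∀ u v : L, p u v = (2 : ℝ)⁻¹ • ⁅u, v⁆ := by
  obtain ⟨-, -, hcurv⟩ := hqc
  have hskew (u v w : L) : B ⁅u, v⁆ w = -B v ⁅u, w⁆ := by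
    simpa only [LieAlgebra.ad_apply, Pi.neg_apply, map_neg] using
      isSkewAdjoint_ad hsymm hpos hkoszul hcurv u v w
  refine ⟨hskew, fun u v ↦ IsLeviCivitaProduct.eq_half_lie hkoszul hpos fun w ↦ ?_⟩
  rw [hskew, hsymm v, neg_add_cancel]
end
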